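/- arXiv:2605.09551 — 11 statements merged into one kernel-verified Lean document; each statement's English description precedes it below -/
import Mathlib

section
/- Let S be 𝖱 or 𝖱⁺, and let q ≥ r ≥ 0. Let g be a multivariate polynomial over S in variables indexed by X ⊕ (Fin q) ⊕ (Fin r), where the Fin q block consists of hypercube variables y₁,…,y_q and the Fin r block consists of complement variables ȳ₁,…,ȳ_r. Then for every assignment x of S-values to the X-variables: the minimum over all Boolean assignments ε : Fin q → {∞,0} of the evaluation of g at (x; y = ε; ȳᵢ = complement of εᵢ for 1 ≤ i ≤ r) equals the minimum over all Boolean assignments σ : Fin r → {∞,0} of the evaluation of g at (x; yᵢ = σᵢ for i ≤ r, y_j = 0 for r < j ≤ q; ȳᵢ = complement of σᵢ). In particular, a hypercube minimum over 2^q Boolean points in which only r of the variables are complemented collapses to a minimum over 2^r substitutions. -/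
/-! Tropical evaluation is monotone in the point, and on Booleans `0 ≤ ∞` in the min-plus order.
So replacing the uncomplemented hypercube coordinates `y_j`, `j ≥ r`, by `0` can only lower the
value, while the lowered point is itself a hypercube point: the minimum is attained there. -/

open MvPolynomial

/-- `𝖱`: the min-plus semiring on `ℝ ∪ {∞}`. -/
abbrev TR : Type := Tropical (WithTop ℝ)

/-- `𝖱⁺`: the min-plus semiring on `ℝ≥0 ∪ {∞}`. -/
abbrev TRP : Type := Tropical (WithTop NNReal)

/-- The Boolean values of a min-plus semiring, indexed by `Bool`:
`true ↦ 0` (the multiplicative identity, tropical `1`) and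
`false ↦ ∞` (the additive identity, tropical `0`).
The complement of the Boolean value `bv S b` is `bv S (!b)`. -/
def bv (S : Type) [Zero S] [One S] (b : Bool) : S := if b then 1 else 0

theorem MvPolynomial.eval_mono {σ S : Type*} [CommSemiring S] [Preorder S] [AddLeftMono S]
    [MulLeftMono S] (p : MvPolynomial σ S) {v w : σ → S} (h : v ≤ w) :
    eval v p ≤ eval w p := by
  induction p using MvPolynomial.induction_on with
  | C a => simp only [eval_C, le_refl]
  | add p q hp hq => simpa only [map_add] using add_le_add hp hq
  | mul_X p i hp => simpa only [map_mul, eval_X] using mul_le_mul' hp (h i)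

theorem Tropical.sum_le_sum_of_forall_exists_le {ι κ R : Type*} [LinearOrder R] [OrderTop R]
    {s : Finset ι} {t : Finset κ} {f : ι → Tropical R} {g : κ → Tropical R}
    (h : ∀ j ∈ t, ∃ i ∈ s, f i ≤ g j) : ∑ i ∈ s, f i ≤ ∑ j ∈ t, g j := by
  rw [← untrop_le_iff, Finset.untrop_sum', Finset.untrop_sum']
  refine Finset.le_inf fun j hj => ?_
  obtain ⟨i, hi, hij⟩ := h j hj
  exact Finset.inf_le_of_le hi hij

theorem one_le_bv {S : Type} [Zero S] [One S] [Preorder S] (h : (1 : S) ≤ 0) (b : Bool) :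
    1 ≤ bv S b := by
  cases b
  · exact h
  · exact le_rfl

theorem hypercube_sum_eval_eq {R : Type} [LinearOrderedAddCommMonoidWithTop R]
    (X : Type) (q r : ℕ) (h : r ≤ q)
    (g : MvPolynomial (X ⊕ (Fin q ⊕ Fin r)) (Tropical R)) (x : X → Tropical R) :
    (∑ ε : Fin q → Bool,
      eval (Sum.elim x (Sum.elim (fun i => bv (Tropical R) (ε i))
        (fun i => bv (Tropical R) (!(ε (Fin.castLE h i)))))) g)
    = ∑ σ : Fin r → Bool,
        eval (Sum.elim x (Sum.elim
          (fun i : Fin q => if hi : (i : ℕ) < r then bv (Tropical R) (σ ⟨i, hi⟩) else 1)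
          (fun i => bv (Tropical R) (!(σ i))))) g := by
  apply le_antisymm
  · refine Tropical.sum_le_sum_of_forall_exists_le fun σ _ =>
      ⟨fun j => if hj : (j : ℕ) < r then σ ⟨j, hj⟩ else true, Finset.mem_univ _, le_of_eq ?_⟩
    refine congrArg (eval · g) (funext fun z => ?_)
    rcases z with z | z | z
    · rfl
    · by_cases hz : (z : ℕ) < r <;> simp [bv, hz]
    · simp
  · refine Tropical.sum_le_sum_of_forall_exists_le fun ε _ =>
      ⟨fun i => ε (Fin.castLE h i), Finset.mem_univ _, eval_mono g ?_⟩
    rintro (z | z | z)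
    · exact le_rfl
    · by_cases hz : (z : ℕ) < r
      · simp [hz]
      · simpa [hz] using one_le_bv (Tropical.le_zero 1) (ε z)
    · exact le_rfl

/-- over `S = 𝖱` or `S = 𝖱⁺`, with `q ≥ r ≥ 0`, for a polynomial `g`
in variables `X ⊕ (Fin q ⊕ Fin r)` (hypercube variables `y₁,…,y_q` and complement
variables `ȳ₁,…,ȳ_r`) and any assignment `x` to the `X`-variables:
the minimum over all Boolean assignments `ε : Fin q → {∞,0}` of the evaluation of
`g` at `(x; y = ε; ȳᵢ = complement of εᵢ for i ≤ r)` equals the minimum over all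
Boolean assignments `σ : Fin r → {∞,0}` of the evaluation of `g` at
`(x; yᵢ = σᵢ for i ≤ r, y_j = 0 for r < j ≤ q; ȳᵢ = complement of σᵢ)`. -/
theorem stmt1 :
    (∀ (X : Type) (q r : ℕ) (h : r ≤ q)
      (g : MvPolynomial (X ⊕ (Fin q ⊕ Fin r)) TR) (x : X → TR),
      (∑ ε : Fin q → Bool,
        eval (Sum.elim x (Sum.elim (fun i => bv TR (ε i))
          (fun i => bv TR (!(ε (Fin.castLE h i)))))) g)
      = ∑ σ : Fin r → Bool,
          eval (Sum.elim x (Sum.elim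
            (fun i : Fin q => if hi : (i : ℕ) < r then bv TR (σ ⟨i, hi⟩) else 1)
            (fun i => bv TR (!(σ i))))) g) ∧
    (∀ (X : Type) (q r : ℕ) (h : r ≤ q)
      (g : MvPolynomial (X ⊕ (Fin q ⊕ Fin r)) TRP) (x : X → TRP),
      (∑ ε : Fin q → Bool,
        eval (Sum.elim x (Sum.elim (fun i => bv TRP (ε i))
          (fun i => bv TRP (!(ε (Fin.castLE h i)))))) g)
      = ∑ σ : Fin r → Bool,
          eval (Sum.elim x (Sum.elim
            (fun i : Fin q => if hi : (i : ℕ) < r then bv TRP (σ ⟨i, hi⟩) else 1)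
            (fun i => bv TRP (!(σ i))))) g) := by
  exact ⟨hypercube_sum_eval_eq, hypercube_sum_eval_eq⟩
end

section
/- Fix k ≥ 1 and let n = 2^k. For t ∈ Fin n and w ∈ Fin k, let β_w(t) ∈ {∞, 0} be the Boolean encoding of the w-th binary digit of t (namely β_w(t) = 0 if that digit is 1, and ∞ if it is 0), and let β̄_w(t) be its complement. Then for every matrix x : Fin n × Fin n → ℝ ∪ {∞}: the minimum over all permutations σ of Fin n of Σᵢ x_{i,σ(i)} equals the minimum over all Boolean matrices Y : Fin n × Fin k → {∞, 0} of the quantity [ Σ_{u < v} min_{w ∈ Fin k} min( Ȳ_{u,w} + Y_{v,w}, Y_{u,w} + Ȳ_{v,w} ) ] + [ Σᵢ min_{t ∈ Fin n} ( x_{i,t} + Σ_{w ∈ Fin k} min( β_w(t) + Y_{i,w}, β̄_w(t) + Ȳ_{i,w} ) ) ], where all sums, minima and additions are taken in ℝ ∪ {∞} with the convention ∞ + a = ∞. (This is the hypercube-sum expression of the min-plus permanent used to place the permanent family in VNP over min-plus semirings.) -/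
open MvPolynomial

/-!
Read a Boolean matrix `Y` row by row as the binary codes of the values of a map
`g : Fin n → Fin n`. In a semiring with `1 + 1 = 1` a sum of Boolean values is `1` exactly when
some summand is, so the factor over pairs `u < v` is `1` if the rows of `Y` are pairwise distinct,
i.e. `g` is injective, and `0` otherwise; in the second factor the product over `w` selects
`t = g i`, leaving `∏ᵢ x_{i,g i}`. Summing over `Y` therefore sums `∏ᵢ x_{i,g i}` over the
injective, hence bijective, maps `g`.
-/

open Finset

section Boolean

variable {S : Type} [NonAssocSemiring S]

lemma bv_mul_bv_add_bv_not_mul_bv_not (a b : Bool) :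
    bv S a * bv S b + bv S (!a) * bv S (!b) = if a = b then 1 else 0 := by
  cases a <;> cases b <;> simp [bv]

lemma bv_not_mul_bv_add_bv_mul_bv_not (a b : Bool) :
    bv S (!a) * bv S b + bv S a * bv S (!b) = if a ≠ b then 1 else 0 := by
  cases a <;> cases b <;> simp [bv]

end Boolean

lemma natCast_eq_one_of_one_add_one {S : Type*} [AddMonoidWithOne S] (h : (1 : S) + 1 = 1) :
    ∀ {n : ℕ}, n ≠ 0 → (n : S) = 1
  | 1, _ => Nat.cast_one
  | n + 2, _ => by rw [Nat.cast_succ, natCast_eq_one_of_one_add_one h n.succ_ne_zero, h]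

lemma sum_boole_of_one_add_one {S : Type*} [AddCommMonoidWithOne S] (h : (1 : S) + 1 = 1)
    {α : Type*} (s : Finset α) (p : α → Prop) [DecidablePred p] :
    (∑ a ∈ s, if p a then (1 : S) else 0) = if ∃ a ∈ s, p a then 1 else 0 := by
  rw [sum_boole]
  split_ifs with hex
  · obtain ⟨a, ha, hpa⟩ := hex
    exact natCast_eq_one_of_one_add_one h (card_ne_zero_of_mem (mem_filter.mpr ⟨ha, hpa⟩))
  · simp [filter_eq_empty_iff.mpr fun a ha hpa => hex ⟨a, ha, hpa⟩]

lemma finTwoPow_testBit_injective (k : ℕ) :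
    Function.Injective fun (t : Fin (2 ^ k)) (w : Fin k) => (t : ℕ).testBit w := by
  intro t s h
  refine Fin.ext (Nat.eq_of_testBit_eq fun i => ?_)
  by_cases hi : i < k
  · exact congrFun h ⟨i, hi⟩
  · have hpow : 2 ^ k ≤ 2 ^ i := Nat.pow_le_pow_right two_pos (not_lt.mp hi)
    rw [Nat.testBit_eq_false_of_lt (t.2.trans_le hpow),
      Nat.testBit_eq_false_of_lt (s.2.trans_le hpow)]

noncomputable def finTwoPowEquivBits (k : ℕ) : Fin (2 ^ k) ≃ (Fin k → Bool) :=
  Equiv.ofBijective _ ((Fintype.bijective_iff_injective_and_card _).mpr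
    ⟨finTwoPow_testBit_injective k, by simp⟩)

lemma sum_perm_eq_sum_ite_injective {α M : Type*} [Fintype α] [DecidableEq α] [AddCommMonoid M]
    (F : (α → α) → M) :
    ∑ σ : Equiv.Perm α, F σ = ∑ g : α → α, if Function.Injective g then F g else 0 := by
  rw [← sum_filter, sum_subtype _ (p := Function.Injective) fun g => by simp]
  exact Fintype.sum_equiv ((Equiv.embeddingEquivOfFinite α).symm.trans
    (Equiv.subtypeInjectiveEquivEmbedding α α).symm) _ _ fun _ => rfl

section Encoding

variable {S : Type} [CommSemiring S] {ι κ : Type*} [Fintype ι] [Fintype κ]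

lemma sum_bv_ne_eq_ite (h : (1 : S) + 1 = 1) (a b : κ → Bool) :
    ∑ w, (bv S (!a w) * bv S (b w) + bv S (a w) * bv S (!b w)) = if a ≠ b then 1 else 0 := by
  simp only [bv_not_mul_bv_add_bv_mul_bv_not, sum_boole_of_one_add_one h, ne_eq, funext_iff,
    mem_univ, true_and, not_forall]

lemma prod_bv_eq_eq_ite (a b : κ → Bool) :
    ∏ w, (bv S (a w) * bv S (b w) + bv S (!a w) * bv S (!b w)) = if a = b then 1 else 0 := by
  simp only [bv_mul_bv_add_bv_not_mul_bv_not, prod_boole, funext_iff, mem_univ, true_implies]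

lemma prod_lt_sum_bv_ne_eq_ite_injective [LinearOrder ι] (h : (1 : S) + 1 = 1)
    (Y : ι × κ → Bool) :
    ∏ p ∈ univ.filter (fun p : ι × ι => p.1 < p.2),
        ∑ w, (bv S (!Y (p.1, w)) * bv S (Y (p.2, w)) + bv S (Y (p.1, w)) * bv S (!Y (p.2, w)))
      = if Function.Injective (Function.curry Y) then 1 else 0 := by
  simp only [sum_bv_ne_eq_ite h (fun w => Y (_, w)), prod_boole, mem_filter_univ]
  congr 1
  exact propext ⟨fun hne => Function.Injective.of_lt_imp_ne fun u v huv => hne (u, v) huv,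
    fun hinj p hp => hinj.ne hp.ne⟩

lemma sum_mul_prod_bv_eq_apply_symm (e : ι ≃ (κ → Bool)) (f : ι → S) (y : κ → Bool) :
    ∑ t, f t * ∏ w, (bv S (e t w) * bv S (y w) + bv S (!e t w) * bv S (!y w))
      = f (e.symm y) := by
  simp only [prod_bv_eq_eq_ite, mul_boole]
  rw [Fintype.sum_eq_single (e.symm y) fun t ht => if_neg fun h => ht (e.eq_symm_apply.mpr h),
    e.apply_symm_apply, if_pos rfl]

theorem sum_perm_prod_eq_sum_boolMatrix [LinearOrder ι] [DecidableEq κ] (h : (1 : S) + 1 = 1)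
    (e : ι ≃ (κ → Bool)) (x : ι × ι → S) :
    ∑ σ : Equiv.Perm ι, ∏ i, x (i, σ i)
      = ∑ Y : ι × κ → Bool,
          (∏ p ∈ univ.filter (fun p : ι × ι => p.1 < p.2),
            ∑ w, (bv S (!Y (p.1, w)) * bv S (Y (p.2, w))
              + bv S (Y (p.1, w)) * bv S (!Y (p.2, w))))
          * ∏ i, ∑ t, x (i, t) *
              ∏ w, (bv S (e t w) * bv S (Y (i, w)) + bv S (!e t w) * bv S (!Y (i, w))) := by
  let Φ : (ι → ι) ≃ (ι × κ → Bool) :=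
    (Equiv.arrowCongr (Equiv.refl ι) e).trans (Equiv.curry ι κ Bool).symm
  rw [sum_perm_eq_sum_ite_injective fun g => ∏ i, x (i, g i)]
  refine Fintype.sum_equiv Φ _ _ fun g => ?_
  rw [prod_lt_sum_bv_ne_eq_ite_injective h]
  simp only [sum_mul_prod_bv_eq_apply_symm e (fun t => x (_, t))]
  -- the rows of `Φ g` are the codes `e (g i)`
  change _ = (if Function.Injective (e ∘ g) then 1 else 0) * ∏ i, x (i, e.symm (e (g i)))
  simp only [e.injective.of_comp_iff, e.symm_apply_apply, boole_mul]

end Encoding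

theorem stmt2_general (k : ℕ) (x : Fin (2 ^ k) × Fin (2 ^ k) → TR) :
    (∑ σ : Equiv.Perm (Fin (2 ^ k)), ∏ i : Fin (2 ^ k), x (i, σ i))
    = ∑ Y : Fin (2 ^ k) × Fin k → Bool,
        (∏ p ∈ Finset.univ.filter (fun p : Fin (2 ^ k) × Fin (2 ^ k) => p.1 < p.2),
          ∑ w : Fin k,
            (bv TR (!(Y (p.1, w))) * bv TR (Y (p.2, w))
              + bv TR (Y (p.1, w)) * bv TR (!(Y (p.2, w)))))
        * ∏ i : Fin (2 ^ k),
            ∑ t : Fin (2 ^ k),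
              x (i, t) *
                ∏ w : Fin k,
                  (bv TR (Nat.testBit (t : ℕ) (w : ℕ)) * bv TR (Y (i, w))
                    + bv TR (!(Nat.testBit (t : ℕ) (w : ℕ))) * bv TR (!(Y (i, w)))) :=
  sum_perm_prod_eq_sum_boolMatrix (Tropical.add_self 1) (finTwoPowEquivBits k) x

/-- for `k ≥ 1` and `n = 2^k`, with `β_w(t) = bv (Nat.testBit t w)`
the Boolean encoding of the `w`-th binary digit of `t`, and for every
`x : Fin n × Fin n → ℝ ∪ {∞}`, the min-plus permanent
`min_σ Σᵢ x_{i,σ(i)}` equals the minimum over all Boolean matrices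
`Y : Fin n × Fin k → {∞,0}` of
`[Σ_{u<v} min_w min(Ȳ_{u,w}+Y_{v,w}, Y_{u,w}+Ȳ_{v,w})] +
 [Σᵢ min_t (x_{i,t} + Σ_w min(β_w(t)+Y_{i,w}, β̄_w(t)+Ȳ_{i,w}))]`.
(In the tropical semiring: `∑` is min, `∏` is real addition.) -/
theorem stmt2 (k : ℕ) (hk : 1 ≤ k) (x : Fin (2 ^ k) × Fin (2 ^ k) → TR) :
    (∑ σ : Equiv.Perm (Fin (2 ^ k)), ∏ i : Fin (2 ^ k), x (i, σ i))
    = ∑ Y : Fin (2 ^ k) × Fin k → Bool,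
        (∏ p ∈ Finset.univ.filter (fun p : Fin (2 ^ k) × Fin (2 ^ k) => p.1 < p.2),
          ∑ w : Fin k,
            (bv TR (!(Y (p.1, w))) * bv TR (Y (p.2, w))
              + bv TR (Y (p.1, w)) * bv TR (!(Y (p.2, w)))))
        * ∏ i : Fin (2 ^ k),
            ∑ t : Fin (2 ^ k),
              x (i, t) *
                ∏ w : Fin k,
                  (bv TR (Nat.testBit (t : ℕ) (w : ℕ)) * bv TR (Y (i, w))
                    + bv TR (!(Nat.testBit (t : ℕ) (w : ℕ))) * bv TR (!(Y (i, w)))) :=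
  stmt2_general k x
end

section
/- Let n ≥ 1 and let Y : Fin n × Fin n → {∞, 0} be a Boolean matrix. Define P(Y) := Σ_{i ∈ Fin n} (min_{j ∈ Fin n} Y_{i,j}) + Σ min( Ȳ_{a,b}, Ȳ_{c,d} ), where the second sum ranges over all unordered pairs of distinct positions (a,b) ≠ (c,d) in Fin n × Fin n lying in the same row (a = c) or in the same column (b = d), and Ȳ denotes the entrywise Boolean complement of Y. Then P(Y) = 0 if Y is a permutation matrix (i.e., there exists a permutation σ of Fin n with Y_{i,j} = 0 exactly when j = σ(i), and Y_{i,j} = ∞ otherwise), and P(Y) = ∞ otherwise. -/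
open MvPolynomial

/-- `P(Y) := Σ_i (min_j Y_{i,j}) + Σ min(Ȳ_{a,b}, Ȳ_{c,d})`, the second sum ranging
over all unordered pairs of distinct positions (represented by lexicographically
ordered pairs) lying in the same row (`a = c`) or the same column (`b = d`).
In the tropical semiring, `Σ` (real addition) is the tropical `∏`, and `min` is
the tropical `+`/`∑`. -/
noncomputable def PY {n : ℕ} (Y : Fin n × Fin n → Bool) : TR :=
  (∏ i : Fin n, ∑ j : Fin n, bv TR (Y (i, j)))
  * ∏ p ∈ Finset.univ.filter
      (fun p : (Fin n × Fin n) × (Fin n × Fin n) =>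
        toLex p.1 < toLex p.2 ∧ (p.1.1 = p.2.1 ∨ p.1.2 = p.2.2)),
      (bv TR (!(Y p.1)) + bv TR (!(Y p.2)))

lemma bv01 (b : Bool) : bv TR b = 0 ∨ bv TR b = 1 := by
  cases b <;> simp [bv]

lemma bv_eq_one_iff (b : Bool) : bv TR b = 1 ↔ b = true := by
  cases b <;> simp [bv]

lemma sum01 {α : Type*} (s : Finset α) (f : α → TR)
    (h : ∀ x ∈ s, f x = 0 ∨ f x = 1) :
    (∑ x ∈ s, f x) = 0 ∨ (∑ x ∈ s, f x) = 1 := by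
  classical
  induction s using Finset.induction_on with
  | empty => simp
  | @insert a s hx ih =>
    rw [Finset.sum_insert hx]
    rcases h a (Finset.mem_insert_self a s) with ha | ha <;>
    rcases ih (fun x hxs => h x (Finset.mem_insert_of_mem hxs)) with hs | hs <;>
    simp [ha, hs]

lemma prod01 {α : Type*} (s : Finset α) (f : α → TR)
    (h : ∀ x ∈ s, f x = 0 ∨ f x = 1) :
    (∏ x ∈ s, f x) = 0 ∨ (∏ x ∈ s, f x) = 1 := by
  classical
  induction s using Finset.induction_on with
  | empty => simp
  | @insert a s hx ih =>
    rw [Finset.prod_insert hx]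
    rcases h a (Finset.mem_insert_self a s) with ha | ha <;>
    rcases ih (fun x hxs => h x (Finset.mem_insert_of_mem hxs)) with hs | hs <;>
    simp [ha, hs]

lemma sum_eq_zero_iff {α : Type*} (s : Finset α) (f : α → TR) :
    (∑ x ∈ s, f x) = 0 ↔ ∀ x ∈ s, f x = 0 := by
  classical
  induction s using Finset.induction_on with
  | empty => simp
  | @insert a s hx ih =>
    rw [Finset.sum_insert hx, Tropical.add_eq_zero_iff, ih]
    simp

lemma sum_eq_one {α : Type*} (s : Finset α) (f : α → TR)
    (h : ∀ x ∈ s, f x = 0 ∨ f x = 1) (h1 : ∃ x ∈ s, f x = 1) :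
    (∑ x ∈ s, f x) = 1 := by
  classical
  induction s using Finset.induction_on with
  | empty => simp at h1
  | @insert a s hx ih =>
    rw [Finset.sum_insert hx]
    have hrest := sum01 s f (fun x hxs => h x (Finset.mem_insert_of_mem hxs))
    rcases h a (Finset.mem_insert_self a s) with ha | ha
    · obtain ⟨x, hxs, hfx⟩ := h1
      rcases Finset.mem_insert.mp hxs with rfl | hxs
      · rw [ha] at hfx; exact absurd hfx (by simp)
      · have : (∑ x ∈ s, f x) = 1 :=
          ih (fun x hxs => h x (Finset.mem_insert_of_mem hxs)) ⟨x, hxs, hfx⟩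
        simp [ha, this]
    · rcases hrest with hs | hs <;> simp [ha, hs]

/-- The combinatorial characterization: every row has a `true`, and no two
distinct positions in the same row or column are both `true`. -/
def Good {n : ℕ} (Y : Fin n × Fin n → Bool) : Prop :=
  (∀ i : Fin n, ∃ j : Fin n, Y (i, j) = true) ∧
  (∀ a b : Fin n × Fin n, a ≠ b → (a.1 = b.1 ∨ a.2 = b.2) →
    ¬(Y a = true ∧ Y b = true))

lemma PY_eq_one_iff {n : ℕ} (Y : Fin n × Fin n → Bool) :
    PY Y = 1 ↔ Good Y := by
  classical
  constructor
  · intro h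
    have hne : PY Y ≠ 0 := by rw [h]; simp
    unfold PY at hne
    rw [mul_ne_zero_iff] at hne
    obtain ⟨h1, h2⟩ := hne
    constructor
    · intro i
      have hs : (∑ j : Fin n, bv TR (Y (i, j))) ≠ 0 := by
        intro h0
        exact h1 (Finset.prod_eq_zero (Finset.mem_univ i) h0)
      have := (not_congr (sum_eq_zero_iff Finset.univ
        (fun j => bv TR (Y (i, j))))).mp hs
      push_neg at this
      obtain ⟨j, _, hj⟩ := this
      refine ⟨j, ?_⟩
      rcases bv01 (Y (i, j)) with h' | h'
      · exact absurd h' hj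
      · exact (bv_eq_one_iff _).mp h'
    · intro a b hab hrc ⟨hYa, hYb⟩
      have key : ∀ a b : Fin n × Fin n, toLex a < toLex b →
          (a.1 = b.1 ∨ a.2 = b.2) → ¬(Y a = true ∧ Y b = true) := by
        rintro a b hlt hrc ⟨hYa, hYb⟩
        have hmem : (a, b) ∈ Finset.univ.filter
            (fun p : (Fin n × Fin n) × (Fin n × Fin n) =>
              toLex p.1 < toLex p.2 ∧ (p.1.1 = p.2.1 ∨ p.1.2 = p.2.2)) := by
          simp [hlt, hrc]
        have hterm : (bv TR (!(Y a)) + bv TR (!(Y b))) ≠ 0 := by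
          intro h0
          exact h2 (Finset.prod_eq_zero hmem h0)
        have := (not_congr Tropical.add_eq_zero_iff).mp hterm
        push_neg at this
        simp [hYa, hYb, bv] at this
      have hlex : toLex a ≠ toLex b := fun h => hab (toLex.injective h)
      rcases lt_or_gt_of_ne hlex with hlt | hlt
      · exact key a b hlt hrc ⟨hYa, hYb⟩
      · exact key b a hlt (hrc.imp Eq.symm Eq.symm) ⟨hYb, hYa⟩
  · rintro ⟨h1, h2⟩
    unfold PY
    rw [Finset.prod_eq_one, Finset.prod_eq_one, mul_one]
    · intro p hp
      rw [Finset.mem_filter] at hp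
      obtain ⟨-, hlt, hrc⟩ := hp
      have hne : p.1 ≠ p.2 := fun h => absurd (congrArg toLex h) (ne_of_lt hlt)
      have hnb := h2 p.1 p.2 hne hrc
      rcases Bool.eq_false_or_eq_true (Y p.1) with hY1 | hY1 <;>
      rcases Bool.eq_false_or_eq_true (Y p.2) with hY2 | hY2
      · exact absurd ⟨hY1, hY2⟩ hnb
      · simp [bv, hY1, hY2]
      · simp [bv, hY1, hY2]
      · simp [bv, hY1, hY2]
    · intro i _
      obtain ⟨j, hj⟩ := h1 i
      exact sum_eq_one _ _ (fun x _ => bv01 _)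
        ⟨j, Finset.mem_univ j, (bv_eq_one_iff _).mpr hj⟩

lemma PY01 {n : ℕ} (Y : Fin n × Fin n → Bool) : PY Y = 0 ∨ PY Y = 1 := by
  classical
  unfold PY
  have hA := prod01 Finset.univ (fun i => ∑ j : Fin n, bv TR (Y (i, j)))
    (fun i _ => sum01 Finset.univ _ (fun j _ => bv01 _))
  have hB := prod01 (Finset.univ.filter
      (fun p : (Fin n × Fin n) × (Fin n × Fin n) =>
        toLex p.1 < toLex p.2 ∧ (p.1.1 = p.2.1 ∨ p.1.2 = p.2.2)))
    (fun p => bv TR (!(Y p.1)) + bv TR (!(Y p.2)))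
    (fun p _ => by
      rcases Bool.eq_false_or_eq_true (Y p.1) with hY1 | hY1 <;>
      rcases Bool.eq_false_or_eq_true (Y p.2) with hY2 | hY2 <;>
      simp [bv, hY1, hY2])
  rcases hA with hA | hA <;> rcases hB with hB | hB <;> simp [hA, hB]

/-- `P(Y) = 0` (the real `0`, i.e. tropical `1`) if `Y` is a
permutation matrix, and `P(Y) = ∞` (tropical `0`) otherwise. -/
theorem stmt3 (n : ℕ) (hn : 1 ≤ n) (Y : Fin n × Fin n → Bool) :
    ((∃ σ : Equiv.Perm (Fin n), ∀ i j : Fin n, Y (i, j) = true ↔ j = σ i) →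
      PY Y = 1) ∧
    ((¬ ∃ σ : Equiv.Perm (Fin n), ∀ i j : Fin n, Y (i, j) = true ↔ j = σ i) →
      PY Y = 0) := by
  classical
  have hGood : (∃ σ : Equiv.Perm (Fin n), ∀ i j : Fin n, Y (i, j) = true ↔ j = σ i)
      ↔ Good Y := by
    constructor
    · rintro ⟨σ, hσ⟩
      constructor
      · exact fun i => ⟨σ i, (hσ i (σ i)).mpr rfl⟩
      · rintro a b hab hrc ⟨hYa, hYb⟩
        have ha : a.2 = σ a.1 := (hσ a.1 a.2).mp (by rwa [Prod.mk.eta])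
        have hb : b.2 = σ b.1 := (hσ b.1 b.2).mp (by rwa [Prod.mk.eta])
        rcases hrc with h | h
        · exact hab (Prod.ext h (by rw [ha, hb, h]))
        · exact hab (Prod.ext (σ.injective (by rw [← ha, ← hb, h])) h)
    · rintro ⟨h1, h2⟩
      have hf : ∀ i, Y (i, Classical.choose (h1 i)) = true :=
        fun i => Classical.choose_spec (h1 i)
      set f : Fin n → Fin n := fun i => Classical.choose (h1 i) with hfdef
      have hinj : Function.Injective f := by
        intro i i' hii'
        by_contra hne
        exact h2 (i, f i) (i', f i') (by simp [Prod.ext_iff, hne])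
          (Or.inr hii') ⟨hf i, hf i'⟩
      refine ⟨Equiv.ofBijective f ((Finite.injective_iff_bijective).mp hinj), ?_⟩
      intro i j
      constructor
      · intro hY
        by_contra hne
        exact h2 (i, j) (i, f i)
          (by simp only [Ne, Prod.mk.injEq]; exact fun h => hne h.2)
          (Or.inl rfl) ⟨hY, hf i⟩
      · rintro rfl
        exact hf i
  constructor
  · intro h
    exact (PY_eq_one_iff Y).mpr (hGood.mp h)
  · intro h
    rcases PY01 Y with h0 | h1
    · exact h0
    · exact absurd (hGood.mpr ((PY_eq_one_iff Y).mp h1)) h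
end

section
/- Let S be 𝖱 or 𝖱⁺, and let M₁, …, M_L be 2×2 matrices over MvPolynomial in the six variables x₁, y₁, x₂, y₂, x₃, y₃ over S, each entry being a single variable or a constant from S. Suppose that for every assignment of S-values to the six variables, the evaluation of the (1,1)-entry of the min-plus matrix product M₁ ⋯ M_L equals min( x₁ + y₁, x₂ + y₂, x₃ + y₃ ). Then for each i ∈ {1,2,3} there exists a path, i.e., a function s : Fin (L+1) → Fin 2 with s 0 = 0 and s L = 0, such that the polynomial ∏_{j=1}^{L} (M_j)_{s(j−1), s(j)} (product in the min-plus semiring of polynomials) equals c ⊗ x_i ⊗ y_i for some constant c ∈ S with c ≠ ∞; in particular this path contains exactly one occurrence of x_i, exactly one occurrence of y_i, and no occurrence of any of the other four variables. -/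
open MvPolynomial

/-- In a (weakest) ABP every matrix entry is a single variable or a constant. -/
def IsABP {S V : Type} [CommSemiring S] {w L : ℕ}
    (M : Fin L → Matrix (Fin w) (Fin w) (MvPolynomial V S)) : Prop :=
  ∀ l i j, (∃ v, M l i j = X v) ∨ (∃ c, M l i j = C c)

/-- The function computed by a (weakest) width-`w` ABP: the evaluation at an
assignment of the `(1,1)`-entry of the min-plus matrix product `M₁ ⋯ M_L`. -/
noncomputable def ABPeval {S V : Type} [CommSemiring S] {w L : ℕ} [NeZero w]
    (M : Fin L → Matrix (Fin w) (Fin w) (MvPolynomial V S)) (a : V → S) : S :=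
  eval a ((List.ofFn M).prod 0 0)

/-!
The top-left entry of `M₁ ⋯ M_L` is the tropical sum, i.e. the minimum, of the weights of the
paths from state `0` to state `0`, and each path weight is a monomial `c ⊗ ∏ vᵈᵛ`. Put
`xᵢ := u`, `yᵢ := v` and every other variable `:= ∞`; then the ABP computes `u + v`. Take a
path that is minimal at `u = v = p > 0`. Its value there is finite, so it contains no other
variable and `c ≠ ∞`, and its value at `(u, v)` is `c + A u + B v`. Since this is `≥ u + v`
everywhere, the points `(0, 0)`, `(c + p, 0)` and `(0, c + p)` give `c ≥ 0`, `A ≥ 1` and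
`B ≥ 1`, and equality at `(p, p)` then forces `A = B = 1`.
-/

open Finset Tropical

section Paths

variable {R : Type*} [CommSemiring R] {n : ℕ}

def pathWeight {L : ℕ} (M : Fin L → Matrix (Fin n) (Fin n) R) (s : Fin (L + 1) → Fin n) : R :=
  ∏ j, M j (s j.castSucc) (s j.succ)

theorem pathWeight_cons {L : ℕ} (M : Fin (L + 1) → Matrix (Fin n) (Fin n) R) (k : Fin n)
    (t : Fin (L + 1) → Fin n) :
    pathWeight M (Fin.cons k t) = M 0 k (t 0) * pathWeight (fun j => M j.succ) t := by
  simp only [pathWeight, Fin.prod_univ_succ, ← Fin.succ_castSucc, Fin.cons_succ, Fin.cons_zero,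
    Fin.castSucc_zero]

theorem list_ofFn_prod_apply_eq_sum_pathWeight {L : ℕ} (M : Fin L → Matrix (Fin n) (Fin n) R)
    (p q : Fin n) :
    (List.ofFn M).prod p q = ∑ s with s 0 = p ∧ s (Fin.last L) = q, pathWeight M s := by
  induction L generalizing p with
  | zero =>
    rw [List.ofFn_zero, List.prod_nil, Matrix.one_apply, sum_filter,
      ← (Equiv.funUnique (Fin 1) (Fin n)).symm.sum_comp]
    simp [pathWeight, ite_and]
  | succ L ih =>
    rw [List.ofFn_succ, List.prod_cons, Matrix.mul_apply, sum_filter,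
      ← (Fin.consEquiv fun _ => Fin n).sum_comp, Fintype.sum_prod_type]
    simp only [Fin.consEquiv, Equiv.coe_fn_mk, ih, mul_sum, sum_filter, Fin.cons_zero,
      ← Fin.succ_last, Fin.cons_succ, pathWeight_cons]
    rw [sum_comm]
    simp only [ite_and, mul_ite, mul_zero, sum_ite_eq, mem_univ, if_true]
    rw [Fintype.sum_eq_single p fun k hk => by simp [hk]]
    simp

end Paths

theorem MvPolynomial.exists_prod_eq_monomial {σ S ι : Type*} [CommSemiring S] (s : Finset ι)
    (e : ι → MvPolynomial σ S) (he : ∀ j ∈ s, (∃ v, e j = X v) ∨ ∃ c, e j = C c) :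
    ∃ d c, ∏ j ∈ s, e j = monomial d c := by
  refine prod_induction e (fun f => ∃ d c, f = monomial d c) ?_ ⟨0, 1, rfl⟩ ?_
  · rintro _ _ ⟨d, c, rfl⟩ ⟨d', c', rfl⟩
    exact ⟨d + d', c * c', monomial_mul⟩
  · intro j hj
    rcases he j hj with ⟨v, hv⟩ | ⟨c, hc⟩
    · exact ⟨_, _, hv⟩
    · exact ⟨0, c, hc⟩

theorem monomial_single_add_single {σ S : Type*} [CommSemiring S] (x y : σ) (A B : ℕ)
    (c : S) :
    monomial (Finsupp.single x A + Finsupp.single y B) c = C c * X x ^ A * X y ^ B := by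
  rw [monomial_single_add, ← C_mul_X_pow_eq_monomial]
  ring

theorem Finsupp.eq_single_add_single_of_support_subset {V M : Type*} [DecidableEq V]
    [AddZeroClass M] {x y : V} (hxy : x ≠ y) {d : V →₀ M} (hd : d.support ⊆ {x, y}) :
    d = single x (d x) + single y (d y) := by
  ext w
  by_cases hwx : w = x
  · subst hwx; simp [hxy]
  by_cases hwy : w = y
  · subst hwy; simp [hxy]
  have : w ∉ d.support := fun hw => by simpa [hwx, hwy] using hd hw
  simp_all

section Arith

variable {α : Type*} [AddCancelCommMonoid α] [LinearOrder α] [IsOrderedAddMonoid α]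

theorem eq_one_and_eq_one_of_add_le {c p : α} {A B : ℕ} (hp : 0 < p)
    (hle : ∀ u v : α, u + v ≤ c + (A • u + B • v))
    (heq : c + (A • p + B • p) = p + p) : A = 1 ∧ B = 1 := by
  have hc : 0 ≤ c := by simpa using hle 0 0
  have hA : 1 ≤ A := by
    by_contra! h
    have := hle (c + p) 0
    simp_all [hp.not_ge]
  have hB : 1 ≤ B := by
    by_contra! h
    have := hle 0 (c + p)
    simp_all [hp.not_ge]
  have hAp : p ≤ A • p := by simpa using nsmul_le_nsmul_left hp.le hA
  have hBp : p ≤ B • p := by simpa using nsmul_le_nsmul_left hp.le hB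
  rw [← zero_add (p + p), eq_comm] at heq
  obtain ⟨-, hsum⟩ := (add_eq_add_iff_eq_and_eq hc (add_le_add hAp hBp)).1 heq
  obtain ⟨hA', hB'⟩ := (add_eq_add_iff_eq_and_eq hAp hBp).1 hsum
  exact ⟨(nsmul_left_strictMono hp).injective (by simpa using hA'.symm),
    (nsmul_left_strictMono hp).injective (by simpa using hB'.symm)⟩

end Arith

section Tropical

variable {α V : Type} [AddCancelCommMonoid α] [LinearOrder α] [IsOrderedAddMonoid α]
  [DecidableEq V]

def pairAssignment (x y : V) (u v : α) : V → Tropical (WithTop α) :=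
  fun w => if w = x then trop ↑u else if w = y then trop ↑v else 0

theorem eval_monomial_pairAssignment_of_not_subset {x y : V} {u v : α} {d : V →₀ ℕ}
    (hd : ¬ d.support ⊆ {x, y}) (c : Tropical (WithTop α)) :
    eval (pairAssignment x y u v) (monomial d c) = 0 := by
  obtain ⟨w, hw, hwxy⟩ := Finset.not_subset.1 hd
  simp only [mem_insert, mem_singleton, not_or] at hwxy
  rw [eval_monomial, Finsupp.prod, prod_eq_zero hw, mul_zero]
  simp [pairAssignment, hwxy, Finsupp.mem_support_iff.1 hw]

theorem untrop_eval_pairAssignment {x y : V} (hxy : x ≠ y) (u v : α) (c : Tropical (WithTop α))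
    (A B : ℕ) :
    untrop (eval (pairAssignment x y u v) (C c * X x ^ A * X y ^ B)) =
      untrop c + (A • (u : WithTop α) + B • (v : WithTop α)) := by
  simp [pairAssignment, hxy.symm, add_assoc]

theorem exists_pathWeight_eq_C_mul_X_mul_X {w L : ℕ} [NeZero w]
    {M : Fin L → Matrix (Fin w) (Fin w) (MvPolynomial V (Tropical (WithTop α)))} (hM : IsABP M)
    {x y : V} (hxy : x ≠ y) {p : α} (hp : 0 < p)
    (hval : ∀ u v : α, ABPeval M (pairAssignment x y u v) = trop ((u + v : α) : WithTop α)) :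
    ∃ s : Fin (L + 1) → Fin w, s 0 = 0 ∧ s (Fin.last L) = 0 ∧
      ∃ c ≠ 0, pathWeight M s = C c * X x * X y := by
  set P : Finset (Fin (L + 1) → Fin w) := univ.filter fun s => s 0 = 0 ∧ s (Fin.last L) = 0
  set value : α → α → (Fin (L + 1) → Fin w) → WithTop α :=
    fun u v s => untrop (eval (pairAssignment x y u v) (pathWeight M s))
  have hmin : ∀ u v, P.inf (value u v) = ((u + v : α) : WithTop α) := fun u v => by
    have := congrArg untrop (hval u v)
    rwa [ABPeval, list_ofFn_prod_apply_eq_sum_pathWeight, map_sum, untrop_sum', untrop_trop]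
      at this
  obtain ⟨s, hsP, hs⟩ := exists_mem_eq_inf P ⟨fun _ => 0, by simp [P]⟩ (value p p)
  rw [hmin] at hs
  obtain ⟨d, c, hdc⟩ : ∃ d c, pathWeight M s = monomial d c :=
    exists_prod_eq_monomial univ _ fun j _ => hM j (s j.castSucc) (s j.succ)
  have hd : d.support ⊆ {x, y} := by
    by_contra hd
    simp only [value, hdc, eval_monomial_pairAssignment_of_not_subset hd, untrop_zero] at hs
    exact WithTop.coe_ne_top hs
  rw [Finsupp.eq_single_add_single_of_support_subset hxy hd, monomial_single_add_single] at hdc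
  have hvalue : ∀ u v,
      value u v s = untrop c + (d x • (u : WithTop α) + d y • (v : WithTop α)) := fun u v => by
    simp only [value, hdc, untrop_eval_pairAssignment hxy]
  have hc : untrop c ≠ ⊤ := fun h => by simp [hvalue, h] at hs
  obtain ⟨c', hc'⟩ := WithTop.ne_top_iff_exists.1 hc
  replace hvalue : ∀ u v, value u v s = ((c' + (d x • u + d y • v) : α) : WithTop α) :=
    fun u v => by rw [hvalue, ← hc']; push_cast; rfl
  obtain ⟨hA, hB⟩ := eq_one_and_eq_one_of_add_le hp
    (fun u v => WithTop.coe_le_coe.1 (hmin u v ▸ hvalue u v ▸ inf_le hsP))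
    (WithTop.coe_inj.1 (hvalue p p ▸ hs).symm)
  obtain ⟨-, hs0, hsL⟩ := mem_filter.1 hsP
  refine ⟨s, hs0, hsL, c, fun h => hc (h ▸ untrop_zero), ?_⟩
  rw [hdc, hA, hB, pow_one, pow_one]

theorem sum_pairAssignment_inl_mul_inr {ι : Type} [Fintype ι] [DecidableEq ι] (i : ι)
    (u v : α) :
    ∑ j, pairAssignment (Sum.inl i) (Sum.inr i) u v (Sum.inl j) *
      pairAssignment (Sum.inl i) (Sum.inr i) u v (Sum.inr j) =
        trop ((u + v : α) : WithTop α) := by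
  rw [sum_eq_single i fun j _ hj => by simp [pairAssignment, hj]] <;> simp [pairAssignment]

theorem exists_pathWeight_eq_C_mul_X_inl_mul_X_inr {ι : Type} [Fintype ι] [DecidableEq ι]
    {p : α} (hp : 0 < p) {w L : ℕ} [NeZero w]
    {M : Fin L → Matrix (Fin w) (Fin w) (MvPolynomial (ι ⊕ ι) (Tropical (WithTop α)))}
    (hM : IsABP M) (hcomp : ∀ a, ABPeval M a = ∑ i, a (Sum.inl i) * a (Sum.inr i)) (i : ι) :
    ∃ s : Fin (L + 1) → Fin w, s 0 = 0 ∧ s (Fin.last L) = 0 ∧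
      ∃ c ≠ 0, pathWeight M s = C c * X (Sum.inl i) * X (Sum.inr i) :=
  exists_pathWeight_eq_C_mul_X_mul_X hM Sum.inl_ne_inr hp fun u v =>
    (hcomp _).trans (sum_pairAssignment_inl_mul_inr i u v)

end Tropical

/-- if a width-2 ABP over `S = 𝖱` or `S = 𝖱⁺` in the six variables
`x₁,y₁,x₂,y₂,x₃,y₃` (encoded as `Sum.inl i = xᵢ`, `Sum.inr i = yᵢ`) computes
`min(x₁+y₁, x₂+y₂, x₃+y₃)` on every assignment, then for each `i ∈ {1,2,3}`
there is a source-to-sink path `s : Fin (L+1) → Fin 2` (with `s 0 = 0` and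
`s L = 0`) whose weight, the min-plus product `∏_{j=1}^{L} (M_j)_{s(j-1),s(j)}`,
equals `c ⊗ x_i ⊗ y_i` for some constant `c ≠ ∞`; in particular the path carries
exactly one `x_i`, exactly one `y_i`, and no other variable. -/
theorem stmt6 :
    (∀ (L : ℕ) (M : Fin L → Matrix (Fin 2) (Fin 2) (MvPolynomial (Fin 3 ⊕ Fin 3) TR)),
      IsABP M →
      (∀ a : (Fin 3 ⊕ Fin 3) → TR,
        ABPeval M a = ∑ i : Fin 3, a (Sum.inl i) * a (Sum.inr i)) →
      ∀ i : Fin 3, ∃ s : Fin (L + 1) → Fin 2, s 0 = 0 ∧ s (Fin.last L) = 0 ∧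
        ∃ c : TR, c ≠ 0 ∧
          (∏ j : Fin L, M j (s j.castSucc) (s j.succ))
            = C c * X (Sum.inl i) * X (Sum.inr i)) ∧
    (∀ (L : ℕ) (M : Fin L → Matrix (Fin 2) (Fin 2) (MvPolynomial (Fin 3 ⊕ Fin 3) TRP)),
      IsABP M →
      (∀ a : (Fin 3 ⊕ Fin 3) → TRP,
        ABPeval M a = ∑ i : Fin 3, a (Sum.inl i) * a (Sum.inr i)) →
      ∀ i : Fin 3, ∃ s : Fin (L + 1) → Fin 2, s 0 = 0 ∧ s (Fin.last L) = 0 ∧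
        ∃ c : TRP, c ≠ 0 ∧
          (∏ j : Fin L, M j (s j.castSucc) (s j.succ))
            = C c * X (Sum.inl i) * X (Sum.inr i)) :=
  ⟨fun _ _ hM hcomp => exists_pathWeight_eq_C_mul_X_inl_mul_X_inr zero_lt_one hM hcomp,
    fun _ _ hM hcomp => exists_pathWeight_eq_C_mul_X_inl_mul_X_inr zero_lt_one hM hcomp⟩
end

section
/- There exists a universal constant C such that the following holds for S = 𝖱 and for S = 𝖱⁺. For every p ≥ 1 and every depth-2p alternating min-plus formula F over S of size s (with s ≥ 1 leaves), there exists a (weakest) width-(2p+1) ABP over S of length at most C · p · s that computes the same function S^V → S as F. -/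
open MvPolynomial

/-- Alternating min-plus formulas of depth `i` over the semiring `S` in
variables `V`: a depth-0 object is a leaf (a variable or a constant), and a
depth-`(i+1)` object is a gate, given by the list of its depth-`i` children
(every gate has fan-out 1 since the children lists are disjoint trees). -/
def Level (V S : Type) : ℕ → Type
  | 0 => V ⊕ S
  | i + 1 => List (Level V S i)

/-- Evaluation of an alternating formula: leaves evaluate to the assigned value
or the constant; gates at odd levels are `⊗` gates (tropical product, i.e. real
addition, of their children) and gates at even levels are `⊕` gates (tropical
sum, i.e. minimum, of their children). -/
def evalLevel {V S : Type} [CommSemiring S] (a : V → S) : (i : ℕ) → Level V S i → S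
  | 0, x => Sum.elim a id x
  | i + 1, ts =>
      if (i + 1) % 2 = 1 then
        (List.map (evalLevel a i) (show List (Level V S i) from ts)).prod
      else
        (List.map (evalLevel a i) (show List (Level V S i) from ts)).sum

/-- The size of an alternating formula is its number of leaves. -/
def sizeLevel {V S : Type} : (i : ℕ) → Level V S i → ℕ
  | 0, _ => 1
  | i + 1, ts => (List.map (sizeLevel i) (show List (Level V S i) from ts)).sum

/-!
Evaluate the formula in registers `0, …, 2p`. A subformula with polynomial `f`, evaluated in
register `q`, becomes a list of matrices whose product is `valueAt q f`: the identity on the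
registers below `q` and `f` at `(q, q)`. Since `valueAt q` is multiplicative, a `⊗`-gate just
concatenates the lists of its children. A `⊕`-gate in register `q` evaluates each child in
register `q + 2` and moves the value to the entry `(q, q + 1)` through
`openBranch q * valueAt (q + 2) f * closeBranch q = summand q f`; the entries `(q, q + 1)` of
successive summands add up, and `closeSum q` brings the sum back to `(q, q)`. Each `⊕`-level
costs two registers, so depth `2p` fits in width `2p + 1`, and every leaf costs `O(p)` matrices
once the leafless (constant) subformulas are folded into single constant entries.
-/

theorem List.prod_flatMap {α M : Type*} [Monoid M] (l : List α) (f : α → List M) :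
    (l.flatMap f).prod = (l.map fun a => (f a).prod).prod := by
  rw [List.flatMap_def, List.prod_flatten, List.map_map, Function.comp_def]

namespace FormulaToABP

section Gadgets

variable {R : Type*} [CommSemiring R] {w : ℕ}

def idPrefix (k : ℕ) : Matrix (Fin w) (Fin w) R :=
  Matrix.of fun j l => if (j : ℕ) = l ∧ (j : ℕ) < k then 1 else 0

def singleAt (a b : ℕ) (x : R) : Matrix (Fin w) (Fin w) R :=
  Matrix.of fun j l => if (j : ℕ) = a ∧ (l : ℕ) = b then x else 0

lemma idPrefix_mul (k : ℕ) (M : Matrix (Fin w) (Fin w) R) :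
    idPrefix k * M = Matrix.of fun (j l : Fin w) => if (j : ℕ) < k then M j l else 0 := by
  ext j l
  rw [Matrix.mul_apply, Finset.sum_eq_single j
    (fun m _ hm => by simp [idPrefix, Fin.val_ne_of_ne hm.symm]) (by simp)]
  simp [idPrefix]

lemma singleAt_mul {b : ℕ} (hb : b < w) (a : ℕ) (x : R) (M : Matrix (Fin w) (Fin w) R) :
    singleAt a b x * M =
      Matrix.of fun (j l : Fin w) => if (j : ℕ) = a then x * M ⟨b, hb⟩ l else 0 := by
  ext j l
  rw [Matrix.mul_apply, Finset.sum_eq_single ⟨b, hb⟩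
    (fun m _ hm => by simp [singleAt, Fin.val_ne_iff.mpr hm]) (by simp)]
  by_cases h : (j : ℕ) = a <;> simp [singleAt, h]

def valueAt (q : ℕ) (x : R) : Matrix (Fin w) (Fin w) R := idPrefix q + singleAt q q x

def accum (q : ℕ) (x : R) : Matrix (Fin w) (Fin w) R := idPrefix (q + 1) + singleAt q (q + 1) x

def summand (q : ℕ) (x : R) : Matrix (Fin w) (Fin w) R := idPrefix (q + 2) + singleAt q (q + 1) x

def openBranch (q : ℕ) : Matrix (Fin w) (Fin w) R := idPrefix (q + 2) + singleAt q (q + 2) 1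

def closeBranch (q : ℕ) : Matrix (Fin w) (Fin w) R :=
  idPrefix (q + 2) + singleAt (q + 2) (q + 1) 1

def closeSum (q : ℕ) : Matrix (Fin w) (Fin w) R := idPrefix q + singleAt (q + 1) q 1

lemma valueAt_mul_valueAt {q : ℕ} (hq : q < w) (x y : R) :
    (valueAt q x * valueAt q y : Matrix (Fin w) (Fin w) R) = valueAt q (x * y) := by
  simp only [valueAt, add_mul, idPrefix_mul, singleAt_mul hq]
  ext j l
  simp only [idPrefix, singleAt, Matrix.of_apply, Matrix.add_apply, true_and]
  split_ifs <;> first | omega | ring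

lemma accum_mul_summand {q : ℕ} (hq : q + 1 < w) (x y : R) :
    (accum q x * summand q y : Matrix (Fin w) (Fin w) R) = accum q (x + y) := by
  simp only [accum, summand, add_mul, idPrefix_mul, singleAt_mul hq]
  ext j l
  simp only [idPrefix, singleAt, Matrix.of_apply, Matrix.add_apply]
  split_ifs <;> first | omega | ring

lemma accum_mul_closeSum {q : ℕ} (hq : q + 1 < w) (x : R) :
    (accum q x * closeSum q : Matrix (Fin w) (Fin w) R) = valueAt q x := by
  simp only [accum, closeSum, valueAt, add_mul, idPrefix_mul, singleAt_mul hq]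
  ext j l
  simp only [idPrefix, singleAt, Matrix.of_apply, Matrix.add_apply, true_and]
  split_ifs <;> first | omega | ring

lemma openBranch_mul_valueAt_mul_closeBranch {q : ℕ} (hq : q + 2 < w) (x : R) :
    (openBranch q * valueAt (q + 2) x * closeBranch q : Matrix (Fin w) (Fin w) R) =
      summand q x := by
  rw [mul_assoc]
  simp only [openBranch, closeBranch, valueAt, summand, add_mul, idPrefix_mul, singleAt_mul hq]
  ext j l
  simp only [idPrefix, singleAt, Matrix.of_apply, Matrix.add_apply, true_and]
  split_ifs <;> first | omega | ring

lemma valueAt_mul_prod_map_valueAt {α : Type*} {q : ℕ} (hq : q < w) (x : R) (f : α → R)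
    (l : List α) :
    (valueAt q x * (l.map fun a => valueAt q (f a)).prod : Matrix (Fin w) (Fin w) R) =
      valueAt q (x * (l.map f).prod) := by
  induction l generalizing x with
  | nil => simp
  | cons a l ih => simp only [List.map_cons, List.prod_cons, ← mul_assoc,
      valueAt_mul_valueAt hq, ih]

lemma accum_mul_prod_map_summand {α : Type*} {q : ℕ} (hq : q + 1 < w) (x : R) (f : α → R)
    (l : List α) :
    (accum q x * (l.map fun a => summand q (f a)).prod : Matrix (Fin w) (Fin w) R) =
      accum q (x + (l.map f).sum) := by
  induction l generalizing x with
  | nil => simp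
  | cons a l ih => simp only [List.map_cons, List.prod_cons, List.sum_cons, ← mul_assoc,
      accum_mul_summand hq, ih, add_assoc]

lemma valueAt_zero_apply_zero [NeZero w] (x : R) :
    (valueAt 0 x : Matrix (Fin w) (Fin w) R) 0 0 = x := by
  simp [valueAt, idPrefix, singleAt]

end Gadgets

variable {V S : Type}

lemma sum_map_sizeLevel_filter_ne_zero {i : ℕ} (ts : List (Level V S i)) :
    ((ts.filter fun t => ¬sizeLevel i t = 0).map (sizeLevel i)).sum =
      (ts.map (sizeLevel i)).sum := by
  have hdead : ((ts.filter fun t => sizeLevel i t = 0).map (sizeLevel i)).sum = 0 := by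
    refine List.sum_eq_zero fun n hn => ?_
    obtain ⟨t, ht, rfl⟩ := List.mem_map.mp hn
    simpa using (List.mem_filter.mp ht).2
  rw [← List.sum_map_filter_add_sum_map_filter_not (fun t => sizeLevel i t = 0) _ ts, hdead,
    zero_add]

variable [CommSemiring S]

def IsAtom (f : MvPolynomial V S) : Prop := (∃ v, f = X v) ∨ ∃ c, f = C c

lemma isAtom_idPrefix_add_singleAt {w k a b : ℕ} {x : MvPolynomial V S} (hx : IsAtom x)
    (hab : a = b → k ≤ a) (j l : Fin w) :
    IsAtom ((idPrefix k + singleAt a b x : Matrix (Fin w) (Fin w) _) j l) := by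
  have zero : IsAtom (0 : MvPolynomial V S) := Or.inr ⟨0, C_0.symm⟩
  have one : IsAtom (1 : MvPolynomial V S) := Or.inr ⟨1, C_1.symm⟩
  simp only [idPrefix, singleAt, Matrix.add_apply, Matrix.of_apply]
  split_ifs with h₁ h₂ h₂
  · omega
  · simpa using one
  · simpa using hx
  · simpa using zero

noncomputable def polyLevel : (i : ℕ) → Level V S i → MvPolynomial V S
  | 0, x => Sum.elim X C x
  | i + 1, ts =>
      if (i + 1) % 2 = 1 then
        (List.map (polyLevel i) (show List (Level V S i) from ts)).prod
      else
        (List.map (polyLevel i) (show List (Level V S i) from ts)).sum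

lemma eval_polyLevel (a : V → S) : ∀ (i : ℕ) (G : Level V S i),
    eval a (polyLevel i G) = evalLevel a i G
  | 0, x => by cases x <;> simp [polyLevel, evalLevel]
  | i + 1, ts => by
    have ih : (List.map (polyLevel i) (show List (Level V S i) from ts)).map (eval a) =
        List.map (evalLevel a i) (show List (Level V S i) from ts) := by
      rw [List.map_map]
      exact List.map_congr_left fun t _ => eval_polyLevel a i t
    simp only [polyLevel, evalLevel]
    split_ifs
    · rw [map_list_prod, ih]
    · rw [map_list_sum, ih]

lemma polyLevel_mem_rangeS_C : ∀ (i : ℕ) (G : Level V S i), sizeLevel i G = 0 →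
    polyLevel i G ∈ (C : S →+* MvPolynomial V S).rangeS
  | 0, _, h => absurd h one_ne_zero
  | i + 1, ts, h => by
    have ih : ∀ f ∈ List.map (polyLevel i) (show List (Level V S i) from ts),
        f ∈ (C : S →+* MvPolynomial V S).rangeS := by
      intro f hf
      obtain ⟨t, ht, rfl⟩ := List.mem_map.mp hf
      exact polyLevel_mem_rangeS_C i t
        (List.sum_eq_zero_iff.mp h _ (List.mem_map_of_mem ht))
    simp only [polyLevel]
    split_ifs
    · exact Subsemiring.list_prod_mem _ ih
    · exact Subsemiring.list_sum_mem _ ih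

/-- Children of size zero have no leaves, so they are constants; they are folded into a single
constant entry, which keeps the length bounded by the size. -/
noncomputable def toABP (w : ℕ) : (i : ℕ) → ℕ → Level V S i →
    List (Matrix (Fin w) (Fin w) (MvPolynomial V S))
  | 0, q, x => [valueAt q (Sum.elim X C x)]
  | i + 1, q, ts =>
      if (i + 1) % 2 = 1 then
        valueAt q ((((show List (Level V S i) from ts).filter
            (fun t => sizeLevel i t = 0)).map (polyLevel i)).prod) ::
          ((show List (Level V S i) from ts).filter (fun t => ¬sizeLevel i t = 0)).flatMap
            (toABP w i q)
      else
        accum q ((((show List (Level V S i) from ts).filter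
            (fun t => sizeLevel i t = 0)).map (polyLevel i)).sum) ::
          (((show List (Level V S i) from ts).filter (fun t => ¬sizeLevel i t = 0)).flatMap
            (fun t => openBranch q :: (toABP w i (q + 2) t ++ [closeBranch q])) ++ [closeSum q])

theorem prod_toABP {w : ℕ} : ∀ (i q : ℕ), q + i < w + i % 2 → ∀ G : Level V S i,
    (toABP w i q G).prod = valueAt q (polyLevel i G)
  | 0, q, _, x => by simp [toABP, polyLevel]
  | i + 1, q, hq, ts => by
    change List (Level V S i) at ts
    by_cases hodd : (i + 1) % 2 = 1
    · simp only [toABP, polyLevel, if_pos hodd]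
      rw [List.prod_cons, List.prod_flatMap]
      have hblock : ∀ t : Level V S i, (toABP w i q t).prod = valueAt q (polyLevel i t) :=
        prod_toABP i q (by omega)
      simp only [hblock]
      rw [valueAt_mul_prod_map_valueAt (by omega), List.prod_map_filter_mul_prod_map_filter_not]
    · simp only [toABP, polyLevel, if_neg hodd]
      rw [List.prod_cons, List.prod_append, List.prod_singleton, List.prod_flatMap]
      have hbranch : ∀ t : Level V S i,
          (openBranch q :: (toABP w i (q + 2) t ++ [closeBranch q])).prod =
            summand q (polyLevel i t) := by
        intro t
        rw [List.prod_cons, List.prod_append, List.prod_singleton, ← mul_assoc,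
          prod_toABP i (q + 2) (by omega) t, openBranch_mul_valueAt_mul_closeBranch (by omega)]
      simp only [hbranch]
      rw [← mul_assoc, accum_mul_prod_map_summand (by omega), accum_mul_closeSum (by omega),
        List.sum_map_filter_add_sum_map_filter_not]

theorem length_toABP_le (w : ℕ) : ∀ (i q : ℕ) (G : Level V S i),
    (toABP w i q G).length ≤ 2 + 4 * i * sizeLevel i G
  | 0, q, x => by simp [toABP]
  | i + 1, q, ts => by
    change List (Level V S i) at ts
    have hlive : ∀ q', ((ts.filter fun t => ¬sizeLevel i t = 0).map
        fun t => (toABP w i q' t).length + 2).sum ≤ 4 * (i + 1) * (ts.map (sizeLevel i)).sum := by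
      intro q'
      rw [← sum_map_sizeLevel_filter_ne_zero, ← List.sum_map_mul_left]
      refine List.sum_le_sum fun t ht => ?_
      have hpos : sizeLevel i t ≠ 0 := by simpa using (List.mem_filter.mp ht).2
      have hchild := length_toABP_le w i q' t
      have hgrow : 4 * i * sizeLevel i t + 4 ≤ 4 * (i + 1) * sizeLevel i t := by
        rw [mul_add, mul_one, add_mul]; omega
      omega
    by_cases hodd : (i + 1) % 2 = 1
    · simp only [toABP, sizeLevel, if_pos hodd, List.length_cons, List.length_flatMap]
      have hle := List.sum_le_sum (l := ts.filter fun t => ¬sizeLevel i t = 0)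
        (f := fun t => (toABP w i q t).length) (g := fun t => (toABP w i q t).length + 2)
        (fun _ _ => by omega)
      have := hlive q
      omega
    · simp only [toABP, sizeLevel, if_neg hodd, List.length_cons, List.length_append,
        List.length_flatMap, List.length_nil, zero_add, add_assoc, one_add_one_eq_two]
      have := hlive (q + 2)
      omega

lemma isAtom_of_mem_toABP (w : ℕ) : ∀ (i q : ℕ) (G : Level V S i),
    ∀ A ∈ toABP w i q G, ∀ j l, IsAtom (A j l)
  | 0, q, x, A, hA, j, l => by
    rw [toABP, List.mem_singleton] at hA
    subst hA
    exact isAtom_idPrefix_add_singleAt (by cases x <;> simp [IsAtom]) (by omega) j l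
  | i + 1, q, ts, A, hA, j, l => by
    change List (Level V S i) at ts
    have hconst : ∀ f ∈ (C : S →+* MvPolynomial V S).rangeS, IsAtom f :=
      fun _ ⟨c, hc⟩ => Or.inr ⟨c, hc.symm⟩
    have hone : IsAtom (1 : MvPolynomial V S) := Or.inr ⟨1, C_1.symm⟩
    have hdead : ∀ f ∈ (ts.filter fun t => sizeLevel i t = 0).map (polyLevel i),
        f ∈ (C : S →+* MvPolynomial V S).rangeS := by
      intro f hf
      obtain ⟨t, ht, rfl⟩ := List.mem_map.mp hf
      exact polyLevel_mem_rangeS_C i t (by simpa using (List.mem_filter.mp ht).2)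
    by_cases hodd : (i + 1) % 2 = 1
    · simp only [toABP, if_pos hodd, List.mem_cons, List.mem_flatMap] at hA
      rcases hA with rfl | ⟨t, -, hA⟩
      · exact isAtom_idPrefix_add_singleAt
          (hconst _ (Subsemiring.list_prod_mem _ hdead)) (by omega) j l
      · exact isAtom_of_mem_toABP w i q t A hA j l
    · simp only [toABP, if_neg hodd, List.mem_cons, List.mem_append, List.mem_flatMap,
        List.not_mem_nil, or_false] at hA
      rcases hA with rfl | ⟨t, -, rfl | hA | rfl⟩ | rfl
      · exact isAtom_idPrefix_add_singleAt
          (hconst _ (Subsemiring.list_sum_mem _ hdead)) (by omega) j l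
      · exact isAtom_idPrefix_add_singleAt hone (by omega) j l
      · exact isAtom_of_mem_toABP w i (q + 2) t A hA j l
      · exact isAtom_idPrefix_add_singleAt hone (by omega) j l
      · exact isAtom_idPrefix_add_singleAt hone (by omega) j l

theorem exists_isABP_eval_eq_evalLevel (p : ℕ) (hp : 1 ≤ p) (F : Level V S (2 * p))
    (hs : 1 ≤ sizeLevel (2 * p) F) :
    ∃ L : ℕ, L ≤ 10 * p * sizeLevel (2 * p) F ∧
      ∃ M : Fin L → Matrix (Fin (2 * p + 1)) (Fin (2 * p + 1)) (MvPolynomial V S),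
        IsABP M ∧ ∀ a : V → S, ABPeval M a = evalLevel a (2 * p) F := by
  set blocks := toABP (2 * p + 1) (2 * p) 0 F
  refine ⟨blocks.length, ?_, blocks.get,
    fun l => isAtom_of_mem_toABP _ _ _ F _ (List.get_mem _ l), fun a => ?_⟩
  · have hps : 1 ≤ p * sizeLevel (2 * p) F := Nat.mul_le_mul hp hs
    calc blocks.length ≤ 2 + 4 * (2 * p) * sizeLevel (2 * p) F := length_toABP_le _ _ _ F
      _ = 2 + 8 * (p * sizeLevel (2 * p) F) := by ring
      _ ≤ 10 * (p * sizeLevel (2 * p) F) := by omega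
      _ = 10 * p * sizeLevel (2 * p) F := by ring
  · rw [ABPeval, List.ofFn_get, prod_toABP _ _ (by omega), valueAt_zero_apply_zero,
      eval_polyLevel]

end FormulaToABP

/-- low-depth formulas to low-width ABPs: there is a universal
constant `C` such that, over `S = 𝖱` and over `S = 𝖱⁺`, for every `p ≥ 1` and
every depth-`2p` alternating `⊕⊗…⊕⊗` min-plus formula `F` of size `s ≥ 1`,
there is a weakest width-`(2p+1)` ABP of length at most `C · p · s` computing
the same function. -/
theorem stmt8 : ∃ C : ℕ,
    (∀ (V : Type) (p : ℕ), 1 ≤ p → ∀ F : Level V TR (2 * p),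
      1 ≤ sizeLevel (2 * p) F →
      ∃ L : ℕ, L ≤ C * p * sizeLevel (2 * p) F ∧
        ∃ M : Fin L → Matrix (Fin (2 * p + 1)) (Fin (2 * p + 1)) (MvPolynomial V TR),
          IsABP M ∧ ∀ a : V → TR, ABPeval M a = evalLevel a (2 * p) F) ∧
    (∀ (V : Type) (p : ℕ), 1 ≤ p → ∀ F : Level V TRP (2 * p),
      1 ≤ sizeLevel (2 * p) F →
      ∃ L : ℕ, L ≤ C * p * sizeLevel (2 * p) F ∧
        ∃ M : Fin L → Matrix (Fin (2 * p + 1)) (Fin (2 * p + 1)) (MvPolynomial V TRP),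
          IsABP M ∧ ∀ a : V → TRP, ABPeval M a = evalLevel a (2 * p) F) :=
  ⟨10, fun _ p hp F hs => FormulaToABP.exists_isABP_eval_eq_evalLevel p hp F hs,
    fun _ p hp F hs => FormulaToABP.exists_isABP_eval_eq_evalLevel p hp F hs⟩
end

section
/- There exists a universal constant C such that the following holds for S = 𝖱 and for S = 𝖱⁺. For every nonempty finite family of monomials over S in a finite variable set V, given by coefficients c_j ∈ S and exponent vectors e_j : V → ℕ for j in a nonempty finite index set J, let s := Σ_{j ∈ J} ( 1 + Σ_{v ∈ V} e_j(v) ). Then there exists a (weakest) width-3 ABP over S of length at most C · s computing the function S^V → S that maps an assignment a to min_{j ∈ J} ( c_j + Σ_{v ∈ V} e_j(v) · a(v) ) (all arithmetic in ℝ ∪ {∞}, respectively ℝ≥0 ∪ {∞}, with ∞ absorbing under addition). In particular, width-3 ABPs over min-plus semirings are universal: every min-plus polynomial is computed by some width-3 ABP. -/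
/-!
Let the layers act on a row vector `(1, m, s)`. A monomial `c · x₁ ⋯ x_k` is produced by one
layer setting `m := c`, one diagonal layer `m := m · xᵢ` per factor, and one layer performing
`s := s + m, m := 0`; after the last monomial one more layer moves `s` to the first coordinate.
This uses `Σ_j (deg_j + 2) + 1 ≤ 3 · Σ_j (1 + deg_j)` layers, with entries that are constants or
variables only, and works over every commutative semiring, the two min-plus semirings included.
-/

open MvPolynomial

namespace WidthThreeABP

section Layers

variable {R : Type} [CommSemiring R]

def startLayer (c : R) : Matrix (Fin 3) (Fin 3) R := !![1, c, 0; 0, 0, 0; 0, 0, 1]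

def factorLayer (x : R) : Matrix (Fin 3) (Fin 3) R := !![1, 0, 0; 0, x, 0; 0, 0, 1]

def endLayer : Matrix (Fin 3) (Fin 3) R := !![1, 0, 0; 0, 0, 1; 0, 0, 1]

def readoutLayer : Matrix (Fin 3) (Fin 3) R := !![0, 0, 0; 0, 0, 0; 1, 0, 0]

def monomialLayers (c : R) (xs : List R) : List (Matrix (Fin 3) (Fin 3) R) :=
  startLayer c :: (xs.map factorLayer ++ [endLayer])

def polynomialLayers (ms : List (R × List R)) : List (Matrix (Fin 3) (Fin 3) R) :=
  ms.flatMap (fun m => monomialLayers m.1 m.2) ++ [readoutLayer]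

theorem prod_map_factorLayer (xs : List R) :
    (xs.map factorLayer).prod = !![1, 0, 0; 0, xs.prod, 0; 0, 0, 1] := by
  induction xs with
  | nil => simp [Matrix.one_fin_three]
  | cons x xs ih =>
    rw [List.map_cons, List.prod_cons, ih, List.prod_cons, factorLayer, Matrix.mul_fin_three]
    simp

theorem prod_monomialLayers (c : R) (xs : List R) :
    (monomialLayers c xs).prod = !![1, 0, c * xs.prod; 0, 0, 0; 0, 0, 1] := by
  rw [monomialLayers, List.prod_cons, List.prod_append, prod_map_factorLayer,
    List.prod_singleton, startLayer, endLayer, Matrix.mul_fin_three, Matrix.mul_fin_three]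
  simp

theorem prod_polynomialLayers (ms : List (R × List R)) :
    (polynomialLayers ms).prod =
      !![(ms.map fun m => m.1 * m.2.prod).sum, 0, 0; 0, 0, 0; 1, 0, 0] := by
  induction ms with
  | nil => simp [polynomialLayers, readoutLayer]
  | cons m ms ih =>
    rw [polynomialLayers, List.flatMap_cons, List.append_assoc, List.prod_append,
      ← polynomialLayers, ih, prod_monomialLayers, List.map_cons, List.sum_cons,
      Matrix.mul_fin_three]
    simp [add_comm]

theorem length_polynomialLayers (ms : List (R × List R)) :
    (polynomialLayers ms).length = (ms.map fun m => m.2.length + 2).sum + 1 := by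
  simp only [polynomialLayers, monomialLayers, List.length_append, List.length_flatMap,
    List.length_cons, List.length_map]
  rfl

end Layers

section Polynomials

variable {S V : Type} [CommSemiring S]

def IsVarOrConst (p : MvPolynomial V S) : Prop := (∃ v, p = X v) ∨ ∃ c, p = C c

@[simp]
theorem isVarOrConst_X (v : V) : IsVarOrConst (X v : MvPolynomial V S) := .inl ⟨v, rfl⟩

@[simp]
theorem isVarOrConst_C (c : S) : IsVarOrConst (C c : MvPolynomial V S) := .inr ⟨c, rfl⟩

@[simp]
theorem isVarOrConst_zero : IsVarOrConst (0 : MvPolynomial V S) := .inr ⟨0, C_0.symm⟩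

@[simp]
theorem isVarOrConst_one : IsVarOrConst (1 : MvPolynomial V S) := .inr ⟨1, C_1.symm⟩

theorem isVarOrConst_polynomialLayers {ms : List (MvPolynomial V S × List (MvPolynomial V S))}
    (hc : ∀ m ∈ ms, IsVarOrConst m.1) (hx : ∀ m ∈ ms, ∀ x ∈ m.2, IsVarOrConst x) :
    ∀ A ∈ polynomialLayers ms, ∀ i j, IsVarOrConst (A i j) := by
  simp only [polynomialLayers, monomialLayers, List.mem_append, List.mem_flatMap, List.mem_cons,
    List.mem_map, List.mem_nil_iff, or_false]
  rintro A (⟨m, hm, rfl | ⟨x, hxm, rfl⟩ | rfl⟩ | rfl) i j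
  · fin_cases i <;> fin_cases j <;> simp [startLayer, hc m hm]
  · fin_cases i <;> fin_cases j <;> simp [factorLayer, hx m hm x hxm]
  · fin_cases i <;> fin_cases j <;> simp [endLayer]
  · fin_cases i <;> fin_cases j <;> simp [readoutLayer]

noncomputable def monomialFactors [Fintype V] (e : V → ℕ) : List (MvPolynomial V S) :=
  Finset.univ.toList.flatMap fun v => List.replicate (e v) (X v)

theorem prod_monomialFactors [Fintype V] (e : V → ℕ) :
    (monomialFactors e : List (MvPolynomial V S)).prod = ∏ v, X v ^ e v := by
  simp [monomialFactors, List.flatMap, List.prod_flatten, Function.comp_def,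
    Finset.prod_map_toList]

theorem length_monomialFactors [Fintype V] (e : V → ℕ) :
    (monomialFactors e : List (MvPolynomial V S)).length = ∑ v, e v := by
  simp [monomialFactors, List.length_flatMap, Finset.sum_map_toList]

theorem isVarOrConst_of_mem_monomialFactors [Fintype V] {e : V → ℕ} {x : MvPolynomial V S}
    (hx : x ∈ monomialFactors e) : IsVarOrConst x := by
  obtain ⟨v, -, hv⟩ := List.mem_flatMap.1 hx
  rw [List.eq_of_mem_replicate hv]
  simp

end Polynomials

theorem exists_abp_width_three (S V J : Type) [CommSemiring S] [Fintype V] [Fintype J]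
    [Nonempty J] (c : J → S) (e : J → V → ℕ) :
    ∃ L : ℕ, L ≤ 3 * ∑ j : J, (1 + ∑ v : V, e j v) ∧
      ∃ M : Fin L → Matrix (Fin 3) (Fin 3) (MvPolynomial V S),
        IsABP M ∧ ∀ a : V → S, ABPeval M a = ∑ j : J, c j * ∏ v : V, a v ^ e j v := by
  set ms : List (MvPolynomial V S × List (MvPolynomial V S)) :=
    Finset.univ.toList.map fun j => (C (c j), monomialFactors (e j))
  refine ⟨(polynomialLayers ms).length, ?_, (polynomialLayers ms).get, ?_, fun a => ?_⟩
  · have hpos : 0 < ∑ j, (1 + ∑ v, e j v) :=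
      Finset.sum_pos (fun _ _ => by omega) Finset.univ_nonempty
    have hle : ∑ j, (∑ v, e j v + 2) ≤ 2 * ∑ j, (1 + ∑ v, e j v) := by
      rw [Finset.mul_sum]
      exact Finset.sum_le_sum fun j _ => by omega
    simp only [length_polynomialLayers, ms, List.map_map, Function.comp_def,
      length_monomialFactors, Finset.sum_map_toList]
    omega
  · refine fun l => isVarOrConst_polynomialLayers ?_ ?_ _ (List.get_mem _ l)
    · simp [ms]
    · simp only [ms, List.mem_map]
      rintro _ ⟨j, -, rfl⟩ x hx
      exact isVarOrConst_of_mem_monomialFactors hx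
  · rw [ABPeval, List.ofFn_get, prod_polynomialLayers]
    simp [ms, Function.comp_def, Finset.sum_map_toList, prod_monomialFactors]

end WidthThreeABP

/-- universality of width-3 ABPs: there is a universal constant
`C` such that, over `S = 𝖱` and over `S = 𝖱⁺`, for every nonempty finite family
of monomials, given by coefficients `c j` and exponent vectors `e j : V → ℕ`
over a finite variable set `V`, with `s := Σ_j (1 + Σ_v e j v)`, there is a
weakest width-3 ABP of length at most `C · s` computing the function
`a ↦ min_j (c_j + Σ_v e_j(v)·a(v))` (tropically, `∑ j, c j * ∏ v, a v ^ e j v`). -/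
theorem stmt9 : ∃ C : ℕ,
    (∀ (V J : Type) [Fintype V] [Fintype J] [Nonempty J]
      (c : J → TR) (e : J → V → ℕ),
      ∃ L : ℕ, L ≤ C * ∑ j : J, (1 + ∑ v : V, e j v) ∧
        ∃ M : Fin L → Matrix (Fin 3) (Fin 3) (MvPolynomial V TR),
          IsABP M ∧
          ∀ a : V → TR, ABPeval M a = ∑ j : J, c j * ∏ v : V, a v ^ e j v) ∧
    (∀ (V J : Type) [Fintype V] [Fintype J] [Nonempty J]
      (c : J → TRP) (e : J → V → ℕ),
      ∃ L : ℕ, L ≤ C * ∑ j : J, (1 + ∑ v : V, e j v) ∧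
        ∃ M : Fin L → Matrix (Fin 3) (Fin 3) (MvPolynomial V TRP),
          IsABP M ∧
          ∀ a : V → TRP, ABPeval M a = ∑ j : J, c j * ∏ v : V, a v ^ e j v) :=
  ⟨3, fun V J _ _ _ => WidthThreeABP.exists_abp_width_three TR V J,
    fun V J _ _ _ => WidthThreeABP.exists_abp_width_three TRP V J⟩
end

section
/- There exists a universal constant C such that the following holds for S = 𝖱 and for S = 𝖱⁺. For every (weakest) width-w ABP of length L over S in a finite variable set, with size s := w · (L + 1) and s ≥ 2, and for every integer p ≥ 1, there exists a (weakest) width-(2p+1) ABP over S computing the same function S^V → S whose size is at most s^{C · p · s^{1/p}}. In particular, every ABP over 𝖱 or 𝖱⁺ can be converted into an equivalent ABP of width O(log s) with at most quasi-polynomial blow-up in size. -/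
open MvPolynomial

/-!
Split a product of at most `n ^ (p + 1)` matrices of size `m` into `n` blocks of at most `n ^ p`
matrices. An entry of the product is a sum over at most `m ^ n` paths of products of `n` entries
of the block products, and by recursion each of those entries is computed by a width-`2p+1` ABP.
At a fixed width, ABPs computing `x` and `y` concatenated with `single 0 0 1` between them compute
`x * y`; a sum costs two extra coordinates, which carry an accumulator column `(v, 1)` that the
shear `[[1, y], [0, 1]]` turns into `(v + y, 1)`. This gives width `2p+1` and length at most
`(m ^ n * (2n + 6)) ^ p`; taking `n ≈ s ^ (1/p)` makes this `s ^ O(p s^(1/p))`.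
-/

theorem List.exists_flatten_eq_of_length_le_mul {α : Type} (c : ℕ) :
    ∀ (n : ℕ) (l : List α), l.length ≤ n * c →
      ∃ L : List (List α), L.length ≤ n ∧ (∀ x ∈ L, x.length ≤ c) ∧ L.flatten = l
  | 0, l, hl => ⟨[], le_rfl, by simp, by simpa using hl⟩
  | n + 1, l, hl => by
    obtain ⟨L, hLn, hLc, hL⟩ := List.exists_flatten_eq_of_length_le_mul c n (l.drop c) <| by
      rw [List.length_drop]; rw [add_mul] at hl; omega
    refine ⟨l.take c :: L, by simpa using hLn, ?_, by simp [hL]⟩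
    rintro x (_ | ⟨_, hx⟩)
    · simp
    · exact hLc x hx

theorem Matrix.exists_list_prod_apply_eq_sum_prod {R : Type} [Semiring R] {m : ℕ} (T : Set R) :
    ∀ (Cs : List (Matrix (Fin m) (Fin m) R)), (∀ C ∈ Cs, ∀ a b, C a b ∈ T) → ∀ i j,
      ∃ mons : List (List R), mons.length ≤ m ^ Cs.length ∧
        (∀ xs ∈ mons, xs.length ≤ Cs.length ∧ ∀ x ∈ xs, x ∈ T) ∧
        Cs.prod i j = (mons.map List.prod).sum
  | [], _, i, j => by
    by_cases hij : i = j
    · exact ⟨[[]], by simp, by simp, by simp [hij]⟩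
    · exact ⟨[], by simp, by simp, by simp [one_apply_ne hij]⟩
  | C :: Cs, hT, i, j => by
    choose mons hlen hmem hsum using fun t =>
      exists_list_prod_apply_eq_sum_prod T Cs (fun D hD => hT D (List.mem_cons_of_mem C hD)) t j
    refine ⟨((List.finRange m).map fun t => (mons t).map (C i t :: ·)).flatten, ?_, ?_, ?_⟩
    · rw [List.length_flatten, List.map_map, List.length_cons, pow_succ']
      refine (List.sum_le_card_nsmul _ (m ^ Cs.length) ?_).trans (by simp)
      simpa using fun t => hlen t
    · simp only [List.mem_flatten, List.mem_map, List.mem_finRange, true_and]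
      rintro _ ⟨_, ⟨t, rfl⟩, hmon⟩
      obtain ⟨xs, hxs, rfl⟩ := List.mem_map.mp hmon
      refine ⟨by simpa using (hmem t xs hxs).1, ?_⟩
      rintro x (_ | ⟨_, hx⟩)
      · exact hT C List.mem_cons_self i t
      · exact (hmem t xs hxs).2 x hx
    · rw [List.prod_cons, mul_apply, Fin.sum_univ_def, List.map_flatten, List.sum_flatten,
        List.map_map, List.map_map]
      congr 1
      refine List.map_congr_left fun t _ => ?_
      simp [hsum t, ← List.sum_map_mul_left, Function.comp_def]

namespace ABP

open Matrix

section Gadgets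

variable {R : Type} [Semiring R] {k : ℕ}

lemma mul_single_mul_apply (A B : Matrix (Fin k) (Fin k) R) (i j a b : Fin k) :
    (A * (single i j (1 : R) * B)) a b = A a i * B j b := by
  simp [Matrix.mul_apply, Matrix.single_apply, ite_and]

def extend (A : Matrix (Fin k) (Fin k) R) : Matrix (Fin (k + 2)) (Fin (k + 2)) R :=
  (fromBlocks A 0 0 1).submatrix finSumFinEquiv.symm finSumFinEquiv.symm

def extendHom : Matrix (Fin k) (Fin k) R →* Matrix (Fin (k + 2)) (Fin (k + 2)) R where
  toFun := extend
  map_one' := by rw [extend, fromBlocks_one, submatrix_one_equiv]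
  map_mul' A B := by
    rw [extend, extend, extend, submatrix_mul_equiv, fromBlocks_multiply]
    simp

/- The two coordinates `ia`, `ib` added by `extend` carry the column `accColumn v = (v, 1)`, which
`shear y` turns into `(v + y, 1)`; `openBlock` and `closeBlock` turn `extend (single 0 0 y)` into
`shear y`. -/
def ia : Fin (k + 2) := ⟨k, by omega⟩
def ib : Fin (k + 2) := ⟨k + 1, by omega⟩

def accColumn (v : R) : Matrix (Fin (k + 2)) (Fin (k + 2)) R := single ia 0 v + single ib 0 1
def shear (v : R) : Matrix (Fin (k + 2)) (Fin (k + 2)) R :=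
  single ia ia 1 + single ia ib v + single ib ib 1
def openBlock : Matrix (Fin (k + 2)) (Fin (k + 2)) R :=
  single ia ia 1 + single ia 0 1 + single ib ib 1
def closeBlock : Matrix (Fin (k + 2)) (Fin (k + 2)) R :=
  single 0 ib 1 + single ia ia 1 + single ib ib 1
def enterSum : Matrix (Fin (k + 2)) (Fin (k + 2)) R := single 0 ia 1

lemma ia_ne_ib : (ia : Fin (k + 2)) ≠ ib := by simp [ia, ib, Fin.ext_iff]
lemma ib_ne_zero : (ib : Fin (k + 2)) ≠ 0 := by simp [ib, Fin.ext_iff]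

lemma shear_mul_accColumn (v y : R) : shear (k := k) y * accColumn v = accColumn (y + v) := by
  simp only [shear, accColumn, Matrix.add_mul, Matrix.mul_add, single_mul_single_same,
    single_mul_single_of_ne, ne_eq, ia_ne_ib, ia_ne_ib.symm, not_false_eq_true, one_mul, mul_one,
    add_zero, zero_add, single_add]
  abel

lemma enterSum_mul_accColumn_apply (v : R) :
    (enterSum * accColumn v : Matrix (Fin (k + 2)) (Fin (k + 2)) R) 0 0 = v := by
  simp [enterSum, accColumn, single_apply_of_row_ne ia_ne_ib.symm]

variable [NeZero k]

lemma ia_ne_zero : (ia : Fin (k + 2)) ≠ 0 := by simp [ia, Fin.ext_iff, NeZero.ne k]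

lemma extend_single_zero_zero (v : R) :
    extend (single (0 : Fin k) 0 v) = single 0 0 v + single ia ia 1 + single ib ib 1 := by
  have hk := NeZero.pos k
  ext i j
  rcases finSumFinEquiv.surjective i with ⟨i | i, rfl⟩ <;>
  rcases finSumFinEquiv.surjective j with ⟨j | j, rfl⟩ <;>
  simp only [extend, submatrix_apply, finSumFinEquiv_apply_left, finSumFinEquiv_apply_right,
    finSumFinEquiv_symm_apply_castAdd, finSumFinEquiv_symm_apply_natAdd, fromBlocks_apply₁₁,
    fromBlocks_apply₁₂, fromBlocks_apply₂₁, fromBlocks_apply₂₂, Matrix.add_apply,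
    single_apply, one_apply, Matrix.zero_apply, ia, ib, Fin.ext_iff, Fin.val_castAdd,
    Fin.val_natAdd, Fin.val_zero] <;>
  split_ifs <;> (try simp only [add_zero, zero_add]) <;> omega

lemma openBlock_mul_extend_mul_closeBlock (y : R) :
    openBlock * extend (single (0 : Fin k) 0 y) * closeBlock = shear y := by
  simp only [extend_single_zero_zero, openBlock, closeBlock, shear, Matrix.add_mul, Matrix.mul_add,
    single_mul_single_same, single_mul_single_of_ne, ne_eq, ia_ne_zero, ib_ne_zero, ia_ne_ib,
    ia_ne_zero.symm, ib_ne_zero.symm, ia_ne_ib.symm, not_false_eq_true, one_mul, mul_one,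
    add_zero, zero_add]
  abel

lemma gadget_apply_eq_zero_or_eq_one {A : Matrix (Fin (k + 2)) (Fin (k + 2)) R}
    (hA : A = enterSum ∨ A = accColumn 0 ∨ A = openBlock ∨ A = closeBlock)
    (i j : Fin (k + 2)) :
    A i j = 0 ∨ A i j = 1 := by
  have hk := NeZero.pos k
  rcases hA with rfl | rfl | rfl | rfl <;>
    simp only [enterSum, accColumn, openBlock, closeBlock, Matrix.add_apply, single_apply, ia, ib,
      Fin.ext_iff, Fin.val_zero] <;>
    split_ifs <;> first | omega | simp

def sumBlock (P : List (Matrix (Fin k) (Fin k) R)) : List (Matrix (Fin (k + 2)) (Fin (k + 2)) R) :=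
  openBlock :: (single 0 0 1 :: P ++ [single 0 0 1]).map extend ++ [closeBlock]

lemma prod_sumBlock (P : List (Matrix (Fin k) (Fin k) R)) :
    (sumBlock P).prod = shear ((P.prod : Matrix (Fin k) (Fin k) R) 0 0) := by
  rw [sumBlock, List.prod_append, List.prod_cons, List.prod_singleton,
    show (extend : Matrix (Fin k) (Fin k) R → _) = extendHom from rfl, ← map_list_prod,
    List.prod_append, List.prod_cons, List.prod_singleton, single_mul_mul_single, one_mul, mul_one]
  exact openBlock_mul_extend_mul_closeBlock _

end Gadgets

section Entries

variable {R : Type} [Semiring R] {s : Set R} (h0 : (0 : R) ∈ s)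
include h0

lemma single_apply_mem {k : ℕ} {c : R} (hc : c ∈ s) (a b i j : Fin k) :
    single a b c i j ∈ s := by
  rw [single_apply]; split_ifs <;> assumption

variable (h1 : (1 : R) ∈ s) {k : ℕ}
include h1

lemma extend_apply_mem {A : Matrix (Fin k) (Fin k) R} (hA : ∀ i j, A i j ∈ s)
    (i j : Fin (k + 2)) : extend A i j ∈ s := by
  rw [extend, submatrix_apply]
  rcases finSumFinEquiv.symm i with a | a <;> rcases finSumFinEquiv.symm j with b | b
  · exact hA a b
  · exact h0
  · exact h0
  · rw [fromBlocks_apply₂₂, one_apply]; split_ifs <;> assumption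

variable [NeZero k]

lemma gadget_apply_mem {A : Matrix (Fin (k + 2)) (Fin (k + 2)) R}
    (hA : A = enterSum ∨ A = accColumn 0 ∨ A = openBlock ∨ A = closeBlock)
    (i j : Fin (k + 2)) :
    A i j ∈ s := by
  rcases gadget_apply_eq_zero_or_eq_one hA i j with h | h <;> rw [h] <;> assumption

lemma sumBlock_apply_mem {P : List (Matrix (Fin k) (Fin k) R)}
    (hP : ∀ A ∈ P, ∀ i j, A i j ∈ s) : ∀ A ∈ sumBlock P, ∀ i j, A i j ∈ s := by
  simp only [sumBlock, List.mem_append, List.mem_cons, List.mem_map, List.not_mem_nil, or_false]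
  rintro A ((rfl | ⟨B, (rfl | hB) | rfl, rfl⟩) | rfl)
  · exact gadget_apply_mem h0 h1 (by simp)
  · exact extend_apply_mem h0 h1 (single_apply_mem h0 h1 0 0)
  · exact extend_apply_mem h0 h1 (hP B hB)
  · exact extend_apply_mem h0 h1 (single_apply_mem h0 h1 0 0)
  · exact gadget_apply_mem h0 h1 (by simp)

end Entries

section Computable

variable {R : Type} [Semiring R]

def ABPComputable (s : Set R) (k B : ℕ) [NeZero k] (x : R) : Prop :=
  ∃ P : List (Matrix (Fin k) (Fin k) R),
    (∀ A ∈ P, ∀ i j, A i j ∈ s) ∧ P.length ≤ B ∧ P.prod 0 0 = x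

variable {s : Set R} {k : ℕ} [NeZero k]

lemma ABPComputable.mono {B B' : ℕ} {x : R} (hx : ABPComputable s k B x) (hB : B ≤ B') :
    ABPComputable s k B' x :=
  let ⟨P, hPs, hPB, hPx⟩ := hx
  ⟨P, hPs, hPB.trans hB, hPx⟩

lemma ABPComputable.of_mem {x : R} (hx : x ∈ s) : ABPComputable s k 1 x :=
  ⟨[Matrix.of fun _ _ => x], by simp [hx], le_rfl, by simp⟩

variable (h0 : (0 : R) ∈ s) (h1 : (1 : R) ∈ s)
include h0 h1

lemma ABPComputable.list_prod {B : ℕ} :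
    ∀ {xs : List R}, (∀ x ∈ xs, ABPComputable s k B x) →
      ABPComputable s k (xs.length * (B + 1)) xs.prod
  | [], _ => ⟨[], by simp, by simp, by simp⟩
  | x :: xs, hxs => by
    obtain ⟨P, hPs, hPB, hP⟩ := hxs x List.mem_cons_self
    obtain ⟨Q, hQs, hQB, hQ⟩ :=
      ABPComputable.list_prod fun y hy => hxs y (List.mem_cons_of_mem x hy)
    refine ⟨P ++ single 0 0 1 :: Q, ?_, ?_, ?_⟩
    · simp only [List.mem_append, List.mem_cons]
      rintro A (hA | rfl | hA)
      · exact hPs A hA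
      · exact single_apply_mem h0 h1 0 0
      · exact hQs A hA
    · simp only [List.length_append, List.length_cons]
      nlinarith
    · rw [List.prod_append, List.prod_cons, mul_single_mul_apply, hP, hQ, List.prod_cons]

lemma exists_prod_mul_accColumn_eq {B : ℕ} :
    ∀ {ys : List R}, (∀ y ∈ ys, ABPComputable s k B y) →
      ∃ Q : List (Matrix (Fin (k + 2)) (Fin (k + 2)) R), (∀ A ∈ Q, ∀ i j, A i j ∈ s) ∧
        Q.length ≤ ys.length * (B + 4) ∧ Q.prod * accColumn 0 = accColumn ys.sum
  | [], _ => ⟨[], by simp, by simp, by simp⟩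
  | y :: ys, hys => by
    obtain ⟨P, hPs, hPB, hP⟩ := hys y List.mem_cons_self
    obtain ⟨Q, hQs, hQB, hQ⟩ :=
      exists_prod_mul_accColumn_eq fun z hz => hys z (List.mem_cons_of_mem y hz)
    refine ⟨sumBlock P ++ Q, ?_, ?_, ?_⟩
    · intro A hA
      rcases List.mem_append.mp hA with hA | hA
      · exact sumBlock_apply_mem h0 h1 hPs A hA
      · exact hQs A hA
    · simp only [sumBlock, List.length_append, List.length_cons, List.length_map, List.length_nil]
      nlinarith
    · rw [List.prod_append, prod_sumBlock, mul_assoc, hQ, hP, shear_mul_accColumn, List.sum_cons]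

lemma ABPComputable.list_sum {B : ℕ} {ys : List R} (hys : ∀ y ∈ ys, ABPComputable s k B y) :
    ABPComputable s (k + 2) (ys.length * (B + 4) + 2) ys.sum := by
  obtain ⟨Q, hQs, hQB, hQ⟩ := exists_prod_mul_accColumn_eq h0 h1 hys
  refine ⟨enterSum :: Q ++ [accColumn 0], ?_, ?_, ?_⟩
  · simp only [List.mem_append, List.mem_cons, List.not_mem_nil, or_false]
    rintro A ((rfl | hA) | rfl)
    · exact gadget_apply_mem h0 h1 (by simp)
    · exact hQs A hA
    · exact gadget_apply_mem h0 h1 (by simp)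
  · simp only [List.length_append, List.length_cons, List.length_nil]
    omega
  · rw [List.cons_append, List.prod_cons, List.prod_append, List.prod_singleton, hQ,
      enterSum_mul_accColumn_apply]

theorem ABPComputable.list_prod_apply {m n : ℕ} :
    ∀ (p : ℕ) (Ms : List (Matrix (Fin m) (Fin m) R)), (∀ A ∈ Ms, ∀ i j, A i j ∈ s) →
      Ms.length ≤ n ^ p → ∀ i j,
      ABPComputable s (2 * p + 1) ((m ^ n * (2 * n + 6)) ^ p) (Ms.prod i j)
  | 0, Ms, hMs, hlen, i, j => by
    refine ABPComputable.of_mem ?_ |>.mono (by simp)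
    rcases Ms with _ | ⟨A, _ | ⟨B, Ms⟩⟩
    · rw [List.prod_nil, one_apply]; split_ifs <;> assumption
    · simpa using hMs A List.mem_cons_self i j
    · simp at hlen
  | p + 1, Ms, hMs, hlen, i, j => by
    obtain ⟨L, hLn, hLc, rfl⟩ :=
      List.exists_flatten_eq_of_length_le_mul (n ^ p) n Ms (by rwa [← pow_succ'])
    obtain ⟨mons, hmons, hmem, hsum⟩ := exists_list_prod_apply_eq_sum_prod
      {x | ABPComputable s (2 * p + 1) ((m ^ n * (2 * n + 6)) ^ p) x} (L.map List.prod) (by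
        simp only [List.mem_map]
        rintro _ ⟨Ns, hNs, rfl⟩ a b
        exact ABPComputable.list_prod_apply p Ns
          (fun A hA => hMs A (List.mem_flatten.mpr ⟨Ns, hNs, hA⟩)) (hLc Ns hNs) a b) i j
    have hm : 1 ≤ m := i.pos
    set H := m ^ n * (2 * n + 6)
    have hprods :
        ∀ y ∈ mons.map List.prod, ABPComputable s (2 * p + 1) (n * (H ^ p + 1)) y := by
      simp only [List.mem_map]
      rintro _ ⟨xs, hxs, rfl⟩
      exact (ABPComputable.list_prod h0 h1 (hmem xs hxs).2).mono
        (Nat.mul_le_mul_right _ (((hmem xs hxs).1.trans (by simpa using hLn))))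
    rw [List.prod_flatten, hsum]
    refine (ABPComputable.list_sum h0 h1 hprods).mono ?_
    calc (mons.map List.prod).length * (n * (H ^ p + 1) + 4) + 2
        ≤ m ^ n * (n * (H ^ p + 1) + 4) + 2 := by
          rw [List.length_map]
          gcongr
          exact hmons.trans (Nat.pow_le_pow_right hm (by simpa using hLn))
      _ ≤ m ^ n * (2 * n + 6) * H ^ p := by
          have hA := Nat.one_le_pow n m hm
          have hX := Nat.one_le_pow p H (by positivity)
          nlinarith [Nat.mul_le_mul_left (m ^ n * n) hX, Nat.mul_le_mul_left (m ^ n) hX]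
      _ = H ^ (p + 1) := (pow_succ' H p).symm

end Computable

lemma exists_nat_le_two_mul_rpow_inv {x : ℝ} (hx : 1 ≤ x) {p : ℕ} (hp : 1 ≤ p) :
    ∃ n : ℕ, 1 ≤ n ∧ x ≤ (n : ℝ) ^ p ∧ (n : ℝ) ≤ 2 * x ^ (1 / p : ℝ) := by
  set e := x ^ (1 / p : ℝ)
  have he : 1 ≤ e := Real.one_le_rpow hx (by positivity)
  refine ⟨⌊e⌋₊ + 1, by omega, ?_, ?_⟩
  · calc x = e ^ p := by
          simp only [e, one_div]
          exact (Real.rpow_inv_natCast_pow (by linarith) (by omega)).symm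
      _ ≤ _ := pow_le_pow_left₀ (by linarith) (by exact_mod_cast (Nat.lt_floor_add_one e).le) p
  · push_cast
    linarith [Nat.floor_le (by linarith : 0 ≤ e)]

lemma two_mul_add_one_mul_le_pow {m L n p : ℕ} (hS : 2 ≤ m * (L + 1)) (hn : 1 ≤ n)
    (hp : 1 ≤ p) :
    (2 * p + 1) * ((m ^ n * (2 * n + 6)) ^ p + 1) ≤ (m * (L + 1)) ^ (10 * (n * p)) := by
  have hm : 0 < m := Nat.pos_of_ne_zero (by rintro rfl; simp at hS)
  set S := m * (L + 1)
  have hmS : m ≤ S := Nat.le_mul_of_pos_right m (by omega)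
  have hH : m ^ n * (2 * n + 6) ≤ S ^ (2 * n + 4) := calc
    m ^ n * (2 * n + 6) ≤ S ^ n * 2 ^ (n + 4) := by
      gcongr
      have := Nat.lt_two_pow_self (n := n + 3)
      rw [pow_succ]
      omega
    _ ≤ S ^ n * S ^ (n + 4) := by gcongr
    _ = S ^ (2 * n + 4) := by ring
  calc (2 * p + 1) * ((m ^ n * (2 * n + 6)) ^ p + 1)
      ≤ S ^ (2 * p + 1) * (S * (S ^ (2 * n + 4)) ^ p) := by
        gcongr
        · exact (Nat.lt_two_pow_self).le.trans (Nat.pow_le_pow_left (by omega) _)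
        · have := Nat.one_le_pow p (m ^ n * (2 * n + 6)) (by positivity)
          have := Nat.pow_le_pow_left hH p
          nlinarith
    _ = S ^ (2 * (n * p) + 6 * p + 2) := by rw [← pow_mul, ← pow_succ', ← pow_add]; ring_nf
    _ ≤ S ^ (10 * (n * p)) := Nat.pow_le_pow_right (by omega) (by nlinarith)

def atoms (V S : Type) [CommSemiring S] : Set (MvPolynomial V S) := Set.range X ∪ Set.range C

lemma isABP_iff_forall_mem_atoms {S V : Type} [CommSemiring S] {w L : ℕ}
    (M : Fin L → Matrix (Fin w) (Fin w) (MvPolynomial V S)) :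
    IsABP M ↔ ∀ l i j, M l i j ∈ atoms V S := by
  simp [IsABP, atoms, eq_comm]

theorem exists_isABP_width_two_mul_add_one {V S : Type} [CommSemiring S] (w L : ℕ)
    (M : Fin L → Matrix (Fin (w + 1)) (Fin (w + 1)) (MvPolynomial V S))
    (hM : IsABP M) (hs : 2 ≤ (w + 1) * (L + 1)) (p : ℕ) (hp : 1 ≤ p) :
    ∃ (L' : ℕ) (M' : Fin L' → Matrix (Fin (2 * p + 1)) (Fin (2 * p + 1)) (MvPolynomial V S)),
      IsABP M' ∧ (∀ a : V → S, ABPeval M' a = ABPeval M a) ∧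
      (((2 * p + 1) * (L' + 1) : ℕ) : ℝ)
        ≤ (((w + 1) * (L + 1) : ℕ) : ℝ)
            ^ (((20 : ℕ) * p : ℝ) * (((w + 1) * (L + 1) : ℕ) : ℝ) ^ (1 / (p : ℝ))) := by
  set s := (w + 1) * (L + 1)
  have hs1 : (1 : ℝ) ≤ s := by exact_mod_cast (by omega : 1 ≤ s)
  obtain ⟨n, hn, hsn, hn2⟩ := exists_nat_le_two_mul_rpow_inv hs1 hp
  have hLs : L ≤ s := (Nat.le_succ L).trans (Nat.le_mul_of_pos_left _ w.succ_pos)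
  have hLn : (List.ofFn M).length ≤ n ^ p := by
    rw [List.length_ofFn]
    exact_mod_cast ((Nat.cast_le (α := ℝ)).mpr hLs).trans hsn
  rw [isABP_iff_forall_mem_atoms] at hM
  obtain ⟨P, hPs, hPlen, hP⟩ := ABPComputable.list_prod_apply (s := atoms V S)
    (Or.inr ⟨0, map_zero C⟩) (Or.inr ⟨1, map_one C⟩) p (List.ofFn M)
    (by simpa [List.mem_ofFn] using hM) hLn 0 0
  refine ⟨P.length, P.get, (isABP_iff_forall_mem_atoms _).2 fun l => hPs _ (P.get_mem l),
    ?_, ?_⟩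
  · simp [ABPeval, hP]
  · calc (((2 * p + 1) * (P.length + 1) : ℕ) : ℝ) ≤ ((s ^ (10 * (n * p)) : ℕ) : ℝ) := by
          exact_mod_cast (Nat.mul_le_mul_left _ (by omega)).trans
            (two_mul_add_one_mul_le_pow hs hn hp)
      _ ≤ _ := by
          rw [Nat.cast_pow, ← Real.rpow_natCast]
          refine Real.rpow_le_rpow_of_exponent_le hs1 ?_
          push_cast
          nlinarith [hn2, (by positivity : (0 : ℝ) ≤ p)]

end ABP

/-- width reduction for ABPs: there is a universal constant `C`
such that, over `S = 𝖱` and over `S = 𝖱⁺`, every weakest width-`w` ABP (here of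
width `w + 1 ≥ 1`) of length `L` in a finite variable set, of size
`s := (w+1)·(L+1) ≥ 2`, can be converted, for every `p ≥ 1`, into a weakest
width-`(2p+1)` ABP computing the same function whose size is at most
`s ^ (C · p · s^(1/p))` (real exponentiation). -/
theorem stmt10 : ∃ C : ℕ,
    (∀ (V : Type) [Fintype V] (w L : ℕ)
      (M : Fin L → Matrix (Fin (w + 1)) (Fin (w + 1)) (MvPolynomial V TR)),
      IsABP M → 2 ≤ (w + 1) * (L + 1) →
      ∀ p : ℕ, 1 ≤ p →
      ∃ (L' : ℕ)
        (M' : Fin L' → Matrix (Fin (2 * p + 1)) (Fin (2 * p + 1)) (MvPolynomial V TR)),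
          IsABP M' ∧ (∀ a : V → TR, ABPeval M' a = ABPeval M a) ∧
          (((2 * p + 1) * (L' + 1) : ℕ) : ℝ)
            ≤ (((w + 1) * (L + 1) : ℕ) : ℝ)
                ^ ((C * p : ℝ) * (((w + 1) * (L + 1) : ℕ) : ℝ) ^ (1 / (p : ℝ)))) ∧
    (∀ (V : Type) [Fintype V] (w L : ℕ)
      (M : Fin L → Matrix (Fin (w + 1)) (Fin (w + 1)) (MvPolynomial V TRP)),
      IsABP M → 2 ≤ (w + 1) * (L + 1) →
      ∀ p : ℕ, 1 ≤ p →
      ∃ (L' : ℕ)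
        (M' : Fin L' → Matrix (Fin (2 * p + 1)) (Fin (2 * p + 1)) (MvPolynomial V TRP)),
          IsABP M' ∧ (∀ a : V → TRP, ABPeval M' a = ABPeval M a) ∧
          (((2 * p + 1) * (L' + 1) : ℕ) : ℝ)
            ≤ (((w + 1) * (L + 1) : ℕ) : ℝ)
                ^ ((C * p : ℝ) * (((w + 1) * (L + 1) : ℕ) : ℝ) ^ (1 / (p : ℝ)))) :=
  ⟨20, fun _ _ => ABP.exists_isABP_width_two_mul_add_one,
    fun _ _ => ABP.exists_isABP_width_two_mul_add_one⟩
end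

section
/- There exists a universal constant C such that: for every nonempty finite set T ⊆ ℕ × ℕ, letting d := max_{(a,b) ∈ T} (a + b), there exists a (weakest) width-2 ABP over 𝖱⁺ in the two variables x, y, of length at most C · (d + 1), such that for every assignment of values from ℝ≥0 ∪ {∞} to x and y, the evaluation of the (1,1)-entry of the product of its matrices equals min_{(a,b) ∈ T} ( a·x + b·y ) (with the convention ∞ absorbing under addition). That is, every ∞-0 bivariate polynomial f over 𝖱⁺ is computable by a width-2 ABP of size O(degree f). -/
/-!
In `𝖱⁺` a monomial `x^a y^b` absorbs every `x^a' y^b'` with `a ≤ a'` and `b ≤ b'`, so only the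
lower staircase of `T` matters: with `m b` the least `a` such that `(a, b') ∈ T` for some `b' ≤ b`,
and `b₀` the least second coordinate in `T`, the polynomial equals `∑_{b₀ ≤ b ≤ d} x^(m b) y^b`,
and `m` is antitone. This sum is evaluated by a Horner scheme in `y` on products of the shape
`!![s, 0; x^(m b), 0]`: `diag(1, x)` raises the power of `x` to the next stair,
`!![1, 1; 0, 1]` adds `x^(m b)` to `s` and `diag(y, 1)` multiplies `s` by `y`. The `x`-steps
telescope to `m b₀ ≤ d`, so the length is at most `3 (d + 1)`.
-/

open MvPolynomial

open Finset Matrix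

namespace WidthTwoHorner

variable {R : Type*} [CommSemiring R]

def stepY (y : R) : Matrix (Fin 2) (Fin 2) R := diagonal ![y, 1]

def stepX (x : R) : Matrix (Fin 2) (Fin 2) R := diagonal ![1, x]

def stepAdd : Matrix (Fin 2) (Fin 2) R := !![1, 1; 0, 1]

def stepInit : Matrix (Fin 2) (Fin 2) R := !![0, 0; 1, 0]

theorem stepY_pow_mul (y s u : R) (k : ℕ) :
    stepY y ^ k * !![s, 0; u, 0] = !![y ^ k * s, 0; u, 0] := by
  ext i j; fin_cases i <;> fin_cases j <;> simp [stepY, diagonal_pow]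

theorem stepX_pow_mul (x s u : R) (k : ℕ) :
    stepX x ^ k * !![s, 0; u, 0] = !![s, 0; x ^ k * u, 0] := by
  ext i j; fin_cases i <;> fin_cases j <;> simp [stepX, diagonal_pow]

theorem stepAdd_mul (s u : R) : stepAdd * !![s, 0; u, 0] = !![s + u, 0; u, 0] := by
  ext i j; fin_cases i <;> fin_cases j <;> simp [stepAdd]

def hornerWord (x y : R) : (ℕ → ℕ) → ℕ → List (Matrix (Fin 2) (Fin 2) R)
  | m, 0 => stepAdd :: List.replicate (m 0) (stepX x) ++ [stepInit]
  | m, n + 1 => stepAdd :: List.replicate (m 0 - m 1) (stepX x) ++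
      stepY y :: hornerWord x y (fun i => m (i + 1)) n

theorem prod_hornerWord (x y : R) {m : ℕ → ℕ} (hm : Antitone m) (n : ℕ) :
    (hornerWord x y m n).prod = !![∑ i ∈ range (n + 1), x ^ m i * y ^ i, 0; x ^ m 0, 0] := by
  induction n generalizing m with
  | zero =>
    rw [hornerWord, List.cons_append, List.prod_cons, List.prod_append, List.prod_replicate,
      List.prod_singleton, stepInit, stepX_pow_mul, stepAdd_mul]
    simp
  | succ n ih =>
    have h01 : m 0 - m 1 + m 1 = m 0 := Nat.sub_add_cancel (hm (Nat.zero_le 1))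
    have ih' := ih (m := fun i => m (i + 1)) fun _ _ h => hm (Nat.succ_le_succ h)
    simp only [zero_add] at ih'
    rw [hornerWord, List.cons_append, List.prod_cons, List.prod_append, List.prod_cons,
      List.prod_replicate, ih', ← pow_one (stepY y), stepY_pow_mul, stepX_pow_mul, stepAdd_mul,
      ← pow_add, h01, sum_range_succ' _ (n + 1), mul_sum]
    simp only [pow_zero, mul_one, pow_succ]
    congr 4
    exact sum_congr rfl fun i _ => by ring

theorem length_hornerWord (x y : R) {m : ℕ → ℕ} (hm : Antitone m) (n : ℕ) :
    (hornerWord x y m n).length = m 0 + 2 * n + 2 := by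
  induction n generalizing m with
  | zero => simp [hornerWord]
  | succ n ih =>
    have h01 : m 1 ≤ m 0 := hm (Nat.zero_le 1)
    have ih' := ih (m := fun i => m (i + 1)) fun _ _ h => hm (Nat.succ_le_succ h)
    simp only [zero_add] at ih'
    simp only [hornerWord, List.length_cons, List.length_append, List.length_replicate, ih']
    omega

theorem mem_hornerWord {x y : R} {m : ℕ → ℕ} {n : ℕ} {M : Matrix (Fin 2) (Fin 2) R}
    (hM : M ∈ hornerWord x y m n) :
    M = stepAdd ∨ M = stepX x ∨ M = stepY y ∨ M = stepInit := by
  induction n generalizing m with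
  | zero =>
    simp only [hornerWord, List.cons_append, List.mem_cons, List.mem_append,
      List.mem_replicate, List.not_mem_nil] at hM
    tauto
  | succ n ih =>
    simp only [hornerWord, List.cons_append, List.mem_cons, List.mem_append,
      List.mem_replicate] at hM
    rcases hM with h | ⟨-, h⟩ | h | h
    · exact Or.inl h
    · exact Or.inr (Or.inl h)
    · exact Or.inr (Or.inr (Or.inl h))
    · exact ih h

def stairWord (x y : R) (b : ℕ) (m : ℕ → ℕ) (n : ℕ) : List (Matrix (Fin 2) (Fin 2) R) :=
  List.replicate b (stepY y) ++ hornerWord x y m n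

theorem prod_stairWord_zero_zero (x y : R) {m : ℕ → ℕ} (hm : Antitone m) (b n : ℕ) :
    (stairWord x y b m n).prod 0 0 = ∑ i ∈ range (n + 1), x ^ m i * y ^ (b + i) := by
  rw [stairWord, List.prod_append, List.prod_replicate, prod_hornerWord x y hm, stepY_pow_mul]
  simp [mul_sum, pow_add, mul_left_comm]

theorem length_stairWord (x y : R) {m : ℕ → ℕ} (hm : Antitone m) (b n : ℕ) :
    (stairWord x y b m n).length = b + m 0 + 2 * n + 2 := by
  rw [stairWord, List.length_append, List.length_replicate, length_hornerWord x y hm]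
  ring

theorem exists_eq_X_or_eq_C_of_mem_stairWord {S V : Type} [CommSemiring S] {u v : V} {b n : ℕ}
    {m : ℕ → ℕ} {M : Matrix (Fin 2) (Fin 2) (MvPolynomial V S)}
    (hM : M ∈ stairWord (X u) (X v) b m n) (i j : Fin 2) :
    (∃ w, M i j = X w) ∨ ∃ c, M i j = C c := by
  have hM' : M = stepAdd ∨ M = stepX (X u) ∨ M = stepY (X v) ∨ M = stepInit := by
    rcases List.mem_append.mp hM with h | h
    · exact Or.inr (Or.inr (Or.inl (List.eq_of_mem_replicate h)))
    · exact mem_hornerWord h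
  have hij : M i j = 0 ∨ M i j = 1 ∨ M i j = X u ∨ M i j = X v := by
    rcases hM' with rfl | rfl | rfl | rfl <;> fin_cases i <;> fin_cases j <;>
      simp [stepAdd, stepX, stepY, stepInit]
  rcases hij with h | h | h | h
  · exact Or.inr ⟨0, h.trans C_0.symm⟩
  · exact Or.inr ⟨1, h.trans C_1.symm⟩
  · exact Or.inl ⟨u, h⟩
  · exact Or.inl ⟨v, h⟩

end WidthTwoHorner

namespace Tropical

variable {R : Type*}

theorem one_le [AddMonoid R] [PartialOrder R] [CanonicallyOrderedAdd R] (x : Tropical R) :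
    1 ≤ x :=
  untrop_le_iff.mp zero_le

theorem pow_mul_pow_le_pow_mul_pow [AddCommMonoid R] [PartialOrder R] [CanonicallyOrderedAdd R]
    [IsOrderedAddMonoid R] (x y : Tropical R) {i j k l : ℕ} (hik : i ≤ k) (hjl : j ≤ l) :
    x ^ i * y ^ j ≤ x ^ k * y ^ l :=
  mul_le_mul' (pow_le_pow_right' (one_le x) hik) (pow_le_pow_right' (one_le y) hjl)

theorem sum_le_sum_of_forall_exists_le_s11 [LinearOrder R] [OrderTop R] {ι κ : Type*}
    {s : Finset ι} {t : Finset κ} {f : ι → Tropical R} {g : κ → Tropical R}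
    (h : ∀ j ∈ t, ∃ i ∈ s, f i ≤ g j) : ∑ i ∈ s, f i ≤ ∑ j ∈ t, g j := by
  rw [← untrop_le_iff, Finset.untrop_sum', Finset.untrop_sum']
  refine Finset.le_inf fun j hj => ?_
  obtain ⟨i, hi, hij⟩ := h j hj
  exact (Finset.inf_le hi).trans hij

end Tropical

/-- The `m b` of the proof idea; it is the junk value `sInf ∅ = 0` when no `t ∈ T` has
`t.2 ≤ b`. -/
noncomputable def lowerStair (T : Finset (ℕ × ℕ)) (b : ℕ) : ℕ :=
  sInf (Prod.fst '' {t | t ∈ T ∧ t.2 ≤ b})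

theorem lowerStair_le {T : Finset (ℕ × ℕ)} {t : ℕ × ℕ} (ht : t ∈ T) {b : ℕ} (hb : t.2 ≤ b) :
    lowerStair T b ≤ t.1 :=
  Nat.sInf_le ⟨t, ⟨ht, hb⟩, rfl⟩

theorem exists_eq_lowerStair {T : Finset (ℕ × ℕ)} {t : ℕ × ℕ} (ht : t ∈ T) {b : ℕ}
    (hb : t.2 ≤ b) : ∃ s ∈ T, s.2 ≤ b ∧ s.1 = lowerStair T b := by
  obtain ⟨s, ⟨hs, hsb⟩, hs1⟩ :=
    Nat.sInf_mem (s := Prod.fst '' {t | t ∈ T ∧ t.2 ≤ b}) ⟨t.1, t, ⟨ht, hb⟩, rfl⟩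
  exact ⟨s, hs, hsb, hs1⟩

theorem lowerStair_antitone {T : Finset (ℕ × ℕ)} {t : ℕ × ℕ} (ht : t ∈ T) :
    Antitone fun i => lowerStair T (t.2 + i) := by
  intro i j hij
  obtain ⟨s, hs, hsb, hs1⟩ := exists_eq_lowerStair ht (Nat.le_add_right t.2 i)
  simpa only [hs1] using lowerStair_le hs (hsb.trans (Nat.add_le_add_left hij t.2))

theorem sum_pow_lowerStair_mul_pow {R : Type*} [AddCommMonoid R] [LinearOrder R] [OrderTop R]
    [CanonicallyOrderedAdd R] [IsOrderedAddMonoid R] (x y : Tropical R) {T : Finset (ℕ × ℕ)}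
    {t₀ : ℕ × ℕ} (ht₀ : t₀ ∈ T) {n : ℕ} (hT : ∀ t ∈ T, t₀.2 ≤ t.2 ∧ t.2 ≤ t₀.2 + n) :
    ∑ i ∈ range (n + 1), x ^ lowerStair T (t₀.2 + i) * y ^ (t₀.2 + i) =
      ∑ t ∈ T, x ^ t.1 * y ^ t.2 := by
  refine le_antisymm (Tropical.sum_le_sum_of_forall_exists_le_s11 fun t ht => ?_)
    (Tropical.sum_le_sum_of_forall_exists_le_s11 fun i _ => ?_)
  · obtain ⟨h₀, hn⟩ := hT t ht
    refine ⟨t.2 - t₀.2, mem_range.mpr (by omega), ?_⟩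
    rw [Nat.add_sub_cancel' h₀]
    exact Tropical.pow_mul_pow_le_pow_mul_pow x y (lowerStair_le ht le_rfl) le_rfl
  · obtain ⟨s, hs, hsb, hs1⟩ := exists_eq_lowerStair ht₀ (Nat.le_add_right t₀.2 i)
    exact ⟨s, hs, Tropical.pow_mul_pow_le_pow_mul_pow x y hs1.le hsb⟩

theorem isABP_get {S V : Type} [CommSemiring S] {w : ℕ}
    {W : List (Matrix (Fin w) (Fin w) (MvPolynomial V S))}
    (hW : ∀ M ∈ W, ∀ i j, (∃ v, M i j = X v) ∨ ∃ c, M i j = C c) :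
    IsABP fun l => W.get l :=
  fun l => hW _ (List.get_mem W l)

theorem ABPeval_get {S V : Type} [CommSemiring S] {w : ℕ} [NeZero w]
    (W : List (Matrix (Fin w) (Fin w) (MvPolynomial V S))) (a : V → S) :
    ABPeval (fun l => W.get l) a = eval a (W.prod 0 0) := by
  rw [ABPeval, List.ofFn_get]

open WidthTwoHorner

/-- there is a universal constant `C` such that for every nonempty
finite set `T ⊆ ℕ × ℕ`, with `d := max_{(a,b) ∈ T} (a+b)`, there is a weakest
width-2 ABP over `𝖱⁺` in the two variables `x, y` (indexed by `Fin 2`), of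
length at most `C · (d+1)`, computing the ∞-0 bivariate polynomial function
`(x,y) ↦ min_{(a,b) ∈ T} (a·x + b·y)` (in tropical notation
`∑ t ∈ T, x ^ t.1 * y ^ t.2`). -/
theorem stmt11 : ∃ C : ℕ,
    ∀ T : Finset (ℕ × ℕ), T.Nonempty →
      ∃ L : ℕ, L ≤ C * (T.sup (fun t => t.1 + t.2) + 1) ∧
        ∃ M : Fin L → Matrix (Fin 2) (Fin 2) (MvPolynomial (Fin 2) TRP),
          IsABP M ∧
          ∀ a : Fin 2 → TRP,
            ABPeval M a = ∑ t ∈ T, (a 0) ^ t.1 * (a 1) ^ t.2 := by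
  refine ⟨3, fun T hT => ?_⟩
  set d := T.sup fun t => t.1 + t.2
  have hd : ∀ t ∈ T, t.1 + t.2 ≤ d := fun t ht => le_sup (f := fun t => t.1 + t.2) ht
  obtain ⟨t₀, ht₀, hmin⟩ := T.exists_min_image Prod.snd hT
  have hm := lowerStair_antitone ht₀
  set W := stairWord (X 0 : MvPolynomial (Fin 2) TRP) (X 1) t₀.2
    (fun i => lowerStair T (t₀.2 + i)) (d - t₀.2)
  refine ⟨W.length, ?_, _, isABP_get fun M hM => exists_eq_X_or_eq_C_of_mem_stairWord hM,
    fun a => ?_⟩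
  · have hstair : lowerStair T t₀.2 ≤ t₀.1 := lowerStair_le ht₀ le_rfl
    have hd₀ := hd t₀ ht₀
    rw [length_stairWord _ _ hm, add_zero]
    omega
  · rw [ABPeval_get, prod_stairWord_zero_zero _ _ hm]
    simp only [map_sum, map_mul, map_pow, eval_X]
    exact sum_pow_lowerStair_mul_pow _ _ ht₀ fun t ht => ⟨hmin t ht, by have := hd t ht; omega⟩
end

section
/- There exists a universal constant C such that the following holds for S = 𝖱 and for S = 𝖱⁺. For every d ≥ 0 and all coefficients a₀, a₁, …, a_d ∈ S, there exists a (weakest) width-2 ABP over S in the single variable x, of length at most C · (d + 1), computing the function S → S that maps x to min_{0 ≤ i ≤ d} ( a_i + i·x ) (arithmetic in ℝ ∪ {∞}, respectively ℝ≥0 ∪ {∞}, with ∞ absorbing). That is, every univariate min-plus polynomial of degree d is computable by a weakest width-2 ABP of size O(d). -/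
open MvPolynomial

/-! Horner's rule `a₀ + x (a₁ + x (a₂ + ⋯))` is a product of the 2×2 matrices `[[1, 0], [aᵢ, x]]`:
their product carries the polynomial in its `(1,0)`-entry, and a leading matrix unit `E₀₁` moves
that entry to position `(0,0)`. Nothing beyond commutative-semiring arithmetic is used, and the
ABP has `d + 2 ≤ 2 (d + 1)` matrices. -/

section Horner

variable {S : Type} [CommSemiring S]

noncomputable def hornerMat (c : S) : Matrix (Fin 2) (Fin 2) (MvPolynomial Unit S) :=
  !![1, 0; C c, X ()]

lemma prod_ofFn_hornerMat {n : ℕ} (a : Fin n → S) :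
    (List.ofFn fun i => hornerMat (a i)).prod =
      !![1, 0; ∑ i, C (a i) * X () ^ (i : ℕ), X () ^ n] := by
  induction n with
  | zero => simp [Matrix.one_fin_two]
  | succ n ih =>
    rw [List.ofFn_succ, List.prod_cons, ih fun i => a i.succ, hornerMat, Matrix.mul_fin_two,
      Fin.sum_univ_succ]
    simp [Finset.mul_sum, pow_succ', mul_left_comm]

noncomputable def hornerABP {n : ℕ} (a : Fin n → S) :
    Fin (n + 1) → Matrix (Fin 2) (Fin 2) (MvPolynomial Unit S) :=
  Fin.cons (Matrix.single 0 1 1) fun i => hornerMat (a i)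

lemma isABP_hornerABP {n : ℕ} (a : Fin n → S) : IsABP (hornerABP a) := by
  intro l i j
  refine Fin.cases ?_ (fun k => ?_) l
  · exact Or.inr ⟨if 0 = i ∧ 1 = j then 1 else 0, by
      simp only [hornerABP, Fin.cons_zero, Matrix.single_apply, apply_ite C, map_one, map_zero]⟩
  · fin_cases i <;> fin_cases j
    · exact Or.inr ⟨1, by simp [hornerABP, hornerMat]⟩
    · exact Or.inr ⟨0, by simp [hornerABP, hornerMat]⟩
    · exact Or.inr ⟨a k, by simp [hornerABP, hornerMat]⟩
    · exact Or.inl ⟨(), by simp [hornerABP, hornerMat]⟩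

lemma ABPeval_hornerABP {n : ℕ} (a : Fin n → S) (x : S) :
    ABPeval (hornerABP a) (fun _ => x) = ∑ i, a i * x ^ (i : ℕ) := by
  rw [ABPeval, List.ofFn_succ, List.prod_cons]
  simp [hornerABP, prod_ofFn_hornerMat]

end Horner

/-- there is a universal constant `C` such that, over `S = 𝖱` and
over `S = 𝖱⁺`, every univariate min-plus polynomial
`x ↦ min_{0 ≤ i ≤ d} (aᵢ + i·x)` (in tropical notation `∑ i, aᵢ * x ^ i`) of
degree `d` is computed by a weakest width-2 ABP (in the single variable,
`V = Unit`) of length at most `C · (d + 1)`. -/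
theorem stmt12 : ∃ C : ℕ,
    (∀ (d : ℕ) (a : Fin (d + 1) → TR),
      ∃ L : ℕ, L ≤ C * (d + 1) ∧
        ∃ M : Fin L → Matrix (Fin 2) (Fin 2) (MvPolynomial Unit TR),
          IsABP M ∧
          ∀ x : TR, ABPeval M (fun _ => x) = ∑ i : Fin (d + 1), a i * x ^ (i : ℕ)) ∧
    (∀ (d : ℕ) (a : Fin (d + 1) → TRP),
      ∃ L : ℕ, L ≤ C * (d + 1) ∧
        ∃ M : Fin L → Matrix (Fin 2) (Fin 2) (MvPolynomial Unit TRP),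
          IsABP M ∧
          ∀ x : TRP, ABPeval M (fun _ => x) = ∑ i : Fin (d + 1), a i * x ^ (i : ℕ)) := by
  refine ⟨2, fun d a => ?_, fun d a => ?_⟩ <;>
    exact ⟨d + 2, by omega, hornerABP a, isABP_hornerABP a, ABPeval_hornerABP a⟩
end

section
/- Let p, a, b be Boolean values (elements of {∞, 0}) of a min-plus semiring (𝖱 or 𝖱⁺), with complements p̄, ā, b̄. Then the following two identities hold, with all arithmetic in ℝ ∪ {∞} (min and +, ∞ absorbing): (1) min( p̄, p + min( a + b̄, b + ā ) ) = min( p̄, a + b̄, b + ā ); and (2) min( p̄, a + b̄, b + ā ) = min over Boolean values α, β ∈ {∞, 0} of [ min(p̄, ᾱ) + min(a, α, β) + min(b̄, α, β) + min(ā, α, β̄) + min(b, α, β̄) ]. That is, the gadget D = p̄ ⊕ p ⊗ (a ⊗ b̄ ⊕ b ⊗ ā) is, on Boolean inputs, a hypercube minimum (over two auxiliary Boolean variables) of a product of five min-plus linear forms. -/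
lemma key {S : Type} [CommSemiring S] (hid : ∀ x : S, x + x = x) (p a b : Bool) :
    (bv S (!p) + bv S p * (bv S a * bv S (!b) + bv S b * bv S (!a))
        = bv S (!p) + bv S a * bv S (!b) + bv S b * bv S (!a)) ∧
      (bv S (!p) + bv S a * bv S (!b) + bv S b * bv S (!a)
        = ∑ α : Bool, ∑ β : Bool,
            (bv S (!p) + bv S (!α)) * (bv S a + bv S α + bv S β)
              * (bv S (!b) + bv S α + bv S β)
              * (bv S (!a) + bv S α + bv S (!β))
              * (bv S b + bv S α + bv S (!β))) := by
  cases p <;> cases a <;> cases b <;>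
    simp [bv, Fintype.sum_bool, hid, add_assoc]

/-- for Boolean values `p, a, b` of `𝖱` (or `𝖱⁺`), with complements
`p̄, ā, b̄`, writing tropical `+` for `min` and tropical `*` for real addition:
(1) `min(p̄, p + min(a+b̄, b+ā)) = min(p̄, a+b̄, b+ā)`; and
(2) `min(p̄, a+b̄, b+ā)` equals the minimum over Boolean `α, β` of
`min(p̄,ᾱ) + min(a,α,β) + min(b̄,α,β) + min(ā,α,β̄) + min(b,α,β̄)`:
the gadget `D = p̄ ⊕ p ⊗ (a ⊗ b̄ ⊕ b ⊗ ā)` is, on Boolean inputs, a hypercube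
minimum of a product of five min-plus linear forms. -/
theorem stmt15 :
    (∀ p a b : Bool,
      (bv TR (!p) + bv TR p * (bv TR a * bv TR (!b) + bv TR b * bv TR (!a))
        = bv TR (!p) + bv TR a * bv TR (!b) + bv TR b * bv TR (!a)) ∧
      (bv TR (!p) + bv TR a * bv TR (!b) + bv TR b * bv TR (!a)
        = ∑ α : Bool, ∑ β : Bool,
            (bv TR (!p) + bv TR (!α)) * (bv TR a + bv TR α + bv TR β)
              * (bv TR (!b) + bv TR α + bv TR β)
              * (bv TR (!a) + bv TR α + bv TR (!β))
              * (bv TR b + bv TR α + bv TR (!β)))) ∧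
    (∀ p a b : Bool,
      (bv TRP (!p) + bv TRP p * (bv TRP a * bv TRP (!b) + bv TRP b * bv TRP (!a))
        = bv TRP (!p) + bv TRP a * bv TRP (!b) + bv TRP b * bv TRP (!a)) ∧
      (bv TRP (!p) + bv TRP a * bv TRP (!b) + bv TRP b * bv TRP (!a)
        = ∑ α : Bool, ∑ β : Bool,
            (bv TRP (!p) + bv TRP (!α)) * (bv TRP a + bv TRP α + bv TRP β)
              * (bv TRP (!b) + bv TRP α + bv TRP β)
              * (bv TRP (!a) + bv TRP α + bv TRP (!β))
              * (bv TRP b + bv TRP α + bv TRP (!β)))) := by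
  exact ⟨fun p a b => key (fun x => Tropical.add_self x) p a b,
    fun p a b => key (fun x => Tropical.add_self x) p a b⟩
end

section
/- Let a, p, q be Boolean values (elements of {∞, 0}) of a min-plus semiring (𝖱 or 𝖱⁺), with complement ā. Then, with all arithmetic in ℝ ∪ {∞} (min and +, ∞ absorbing): min( ā, a + p + q ) = min( ā, p + q ), and moreover min( ā, p + q ) = min over Boolean values λ ∈ {∞, 0} of [ min(ā, λ̄) + min(p, λ) + min(q, λ) ]. That is, the gadget B = ā ⊕ a ⊗ p ⊗ q is, on Boolean inputs, a hypercube minimum (over one auxiliary Boolean variable) of a product of three min-plus linear forms. -/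
/-- for Boolean values `a, p, q` of `𝖱` (or `𝖱⁺`), with complement
`ā`, writing tropical `+` for `min` and tropical `*` for real addition:
`min(ā, a+p+q) = min(ā, p+q)`, and moreover `min(ā, p+q)` equals the minimum
over Boolean `λ` of `min(ā, λ̄) + min(p, λ) + min(q, λ)`: the gadget
`B = ā ⊕ a ⊗ p ⊗ q` is, on Boolean inputs, a hypercube minimum of a product of
three min-plus linear forms. -/
theorem stmt16 :
    (∀ a p q : Bool,
      (bv TR (!a) + bv TR a * bv TR p * bv TR q = bv TR (!a) + bv TR p * bv TR q) ∧
      (bv TR (!a) + bv TR p * bv TR q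
        = ∑ l : Bool,
            (bv TR (!a) + bv TR (!l)) * (bv TR p + bv TR l) * (bv TR q + bv TR l))) ∧
    (∀ a p q : Bool,
      (bv TRP (!a) + bv TRP a * bv TRP p * bv TRP q
        = bv TRP (!a) + bv TRP p * bv TRP q) ∧
      (bv TRP (!a) + bv TRP p * bv TRP q
        = ∑ l : Bool,
            (bv TRP (!a) + bv TRP (!l)) * (bv TRP p + bv TRP l)
              * (bv TRP q + bv TRP l))) := by
  constructor <;> intro a p q <;> cases a <;> cases p <;> cases q <;>
    simp [bv, Fintype.sum_bool]
end
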